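/- arXiv:math/0304229 — 8 statements merged into one kernel-verified Lean document; each statement's English description precedes it below -/
import Mathlib

section
/- For every k ≥ 1 and real x with |x| < 1/k², the generating function of squares of Stirling numbers satisfies Σ_{n ≥ k} S(n,k)² x^n = x^k Σ_{r=1}^{k} Σ_{s=1}^{k} A(k,r) A(k,s) / (1 - r s x), where A(k,r) = (-1)^{k-r} r^k C(k,r) / k!. -/
/-- Stirling numbers of the second kind. -/
def stirling : ℕ → ℕ → ℕ
  | 0, 0 => 1
  | 0, _ + 1 => 0
  | _ + 1, 0 => 0
  | n + 1, k + 1 => (k + 1) * stirling n (k + 1) + stirling n k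

/-- The coefficients `A(k,r) = (-1)^{k-r} r^k C(k,r) / k!`. -/
noncomputable def A (k r : ℕ) : ℝ :=
  (-1 : ℝ) ^ (k - r) * (r : ℝ) ^ k * (Nat.choose k r : ℝ) / (Nat.factorial k : ℝ)

noncomputable def B (n k : ℕ) : ℝ :=
  ∑ r ∈ Finset.range (k + 1), (-1 : ℝ) ^ r * (k.choose r : ℝ) * (r : ℝ) ^ n

lemma choose_mul_aux (k s : ℕ) :
    ((s : ℝ) + 1) * ((k + 1).choose (s + 1) : ℝ) = ((k : ℝ) + 1) * (k.choose s : ℝ) := by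
  have h : ((s + 1) * ((k + 1).choose (s + 1)) : ℕ) = ((k + 1) * k.choose s : ℕ) := by
    rw [mul_comm ((s:ℕ)+1)]
    exact (Nat.add_one_mul_choose_eq k s).symm
  exact_mod_cast congrArg (Nat.cast : ℕ → ℝ) h

lemma B_succ (n k : ℕ) : B (n + 1) (k + 1) = ((k : ℝ) + 1) * (B n (k + 1) - B n k) := by
  set U : ℝ := ∑ s ∈ Finset.range (k + 1),
      (-1 : ℝ) ^ s * (k.choose s : ℝ) * ((s : ℝ) + 1) ^ n with hU
  have h1 : B (n + 1) (k + 1) = -(((k : ℝ) + 1) * U) := by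
    rw [B, Finset.sum_range_succ' _ (k + 1)]
    simp only [Nat.cast_zero, Nat.choose_zero_right, Nat.cast_one, pow_zero,
      zero_pow (Nat.succ_ne_zero n), mul_zero, add_zero, one_mul]
    rw [hU, Finset.mul_sum, ← Finset.sum_neg_distrib]
    apply Finset.sum_congr rfl
    intro s _
    have hc := choose_mul_aux k s
    push_cast
    calc (-1 : ℝ) ^ (s + 1) * ((k + 1).choose (s + 1) : ℝ) * ((s : ℝ) + 1) ^ (n + 1)
        = -((-1 : ℝ) ^ s * (((s : ℝ) + 1) * ((k + 1).choose (s + 1) : ℝ)) * ((s : ℝ) + 1) ^ n) := by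
          ring
      _ = -(((k : ℝ) + 1) * ((-1 : ℝ) ^ s * (k.choose s : ℝ) * ((s : ℝ) + 1) ^ n)) := by
          rw [hc]; ring
  have h2 : B n (k + 1) = B n k - U := by
    have hkext : ∑ s ∈ Finset.range (k + 1),
        (-1 : ℝ) ^ (s + 1) * (k.choose (s + 1) : ℝ) * ((s : ℝ) + 1) ^ n
        = ∑ s ∈ Finset.range k,
        (-1 : ℝ) ^ (s + 1) * (k.choose (s + 1) : ℝ) * ((s : ℝ) + 1) ^ n := by
      rw [Finset.sum_range_succ]
      simp [Nat.choose_succ_self]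
    have hBk : B n k = ∑ s ∈ Finset.range k,
        (-1 : ℝ) ^ (s + 1) * (k.choose (s + 1) : ℝ) * ((s : ℝ) + 1) ^ n + (0 : ℝ) ^ n := by
      rw [B, Finset.sum_range_succ' _ k]
      simp
    rw [B, Finset.sum_range_succ' _ (k + 1)]
    have hsplit : ∀ s ∈ Finset.range (k + 1),
        (-1 : ℝ) ^ (s + 1) * ((k + 1).choose (s + 1) : ℝ) * (((s : ℕ) + 1 : ℕ) : ℝ) ^ n
        = (-1 : ℝ) ^ (s + 1) * (k.choose (s + 1) : ℝ) * ((s : ℝ) + 1) ^ n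
          + (-((-1 : ℝ) ^ s * (k.choose s : ℝ) * ((s : ℝ) + 1) ^ n)) := by
      intro s _
      rw [Nat.choose_succ_succ]
      push_cast
      ring
    rw [Finset.sum_congr rfl hsplit, Finset.sum_add_distrib, hkext, Finset.sum_neg_distrib,
      ← hU, hBk]
    simp
    ring
  rw [h1, h2]; ring

lemma factorial_stirling : ∀ n k : ℕ, (k.factorial : ℝ) * (stirling n k : ℝ) = (-1 : ℝ) ^ k * B n k := by
  intro n
  induction n with
  | zero =>
    intro k
    cases k with
    | zero => simp [stirling, B]
    | succ k =>
      have h : B 0 (k + 1) = 0 := by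
        have := @Int.alternating_sum_range_choose (k + 1)
        rw [if_neg (Nat.succ_ne_zero k)] at this
        have h2 : ((∑ m ∈ Finset.range (k + 1 + 1), (-1 : ℤ) ^ m * ((k+1).choose m) : ℤ) : ℝ) = 0 := by
          rw [this]; norm_num
        push_cast at h2
        rw [B]
        simpa using h2
      simp [stirling, h]
  | succ n ih =>
    intro k
    cases k with
    | zero => simp [stirling, B]
    | succ k =>
      have hs : (stirling (n + 1) (k + 1) : ℝ)
          = (k + 1 : ℝ) * (stirling n (k + 1) : ℝ) + (stirling n k : ℝ) := by
        show ((((k + 1) * stirling n (k + 1) + stirling n k : ℕ)) : ℝ) = _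
        push_cast; ring
      have hfac : ((k + 1).factorial : ℝ) = ((k : ℝ) + 1) * (k.factorial : ℝ) := by
        rw [Nat.factorial_succ]; push_cast; ring
      have h1 := ih (k + 1)
      have h2 := ih k
      rw [hs, B_succ, hfac]
      rw [hfac] at h1
      have : ((k:ℝ)+1) * ((k.factorial : ℝ)) ≠ 0 := by positivity
      linear_combination ((k:ℝ)+1) * h1 + ((k:ℝ)+1) * h2

lemma stirling_eq_zero : ∀ n k : ℕ, n < k → stirling n k = 0 := by
  intro n
  induction n with
  | zero => intro k hk; cases k with
    | zero => omega
    | succ k => rfl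
  | succ n ih =>
    intro k hk
    cases k with
    | zero => omega
    | succ k =>
      show (k + 1) * stirling n (k + 1) + stirling n k = 0
      rw [ih (k + 1) (by omega), ih k (by omega)]
      ring

lemma stirling_formula (k n : ℕ) (hk : 1 ≤ k) (hn : k ≤ n) :
    (stirling n k : ℝ) = ∑ r ∈ Finset.Icc 1 k, A k r * (r : ℝ) ^ (n - k) := by
  have hfac : (k.factorial : ℝ) ≠ 0 := by positivity
  have hmain := factorial_stirling n k
  have hterm : ∀ r ∈ Finset.Icc 1 k, A k r * (r : ℝ) ^ (n - k)
      = (-1 : ℝ) ^ k * ((-1 : ℝ) ^ r * (k.choose r : ℝ) * (r : ℝ) ^ n) / (k.factorial : ℝ) := by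
    intro r hr
    rw [Finset.mem_Icc] at hr
    have hsq : ((-1 : ℝ)) ^ r * ((-1 : ℝ)) ^ r = 1 := by
      rw [← mul_pow]; norm_num
    have h1 : (-1 : ℝ) ^ (k - r) * (-1 : ℝ) ^ r = (-1 : ℝ) ^ k := by
      rw [← pow_add, Nat.sub_add_cancel hr.2]
    have h1' : (-1 : ℝ) ^ k * (-1 : ℝ) ^ r = (-1 : ℝ) ^ (k - r) := by
      rw [← h1, mul_assoc, hsq, mul_one]
    have h2 : (r : ℝ) ^ k * (r : ℝ) ^ (n - k) = (r : ℝ) ^ n := by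
      rw [← pow_add, Nat.add_sub_cancel' hn]
    rw [A, ← h1', ← h2]
    ring
  have key : ∑ r ∈ Finset.Icc 1 k, A k r * (r : ℝ) ^ (n - k)
      = ∑ r ∈ Finset.range (k + 1),
          (-1 : ℝ) ^ k * ((-1 : ℝ) ^ r * (k.choose r : ℝ) * (r : ℝ) ^ n) / (k.factorial : ℝ) := by
    rw [Finset.sum_congr rfl hterm]
    apply Finset.sum_subset
    · intro r hr
      rw [Finset.mem_Icc] at hr
      rw [Finset.mem_range]; omega
    · intro r hr hr'
      rw [Finset.mem_range] at hr
      rw [Finset.mem_Icc] at hr'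
      have : r = 0 := by omega
      subst this
      have hn1 : n ≠ 0 := by omega
      simp [zero_pow hn1]
  rw [key, ← Finset.sum_div, ← Finset.mul_sum, ← B, ← hmain, mul_comm,
    mul_div_assoc, div_self hfac, mul_one]

/-- For `k ≥ 1` and `|x| < 1/k²`,
`Σ_{n ≥ k} S(n,k)² x^n = x^k Σ_{r,s=1}^{k} A(k,r) A(k,s) / (1 - r s x)`. -/
theorem stirling_squares_gf (k : ℕ) (hk : 1 ≤ k) (x : ℝ) (hx : |x| < 1 / (k : ℝ) ^ 2) :
    ∑' n : ℕ, (stirling n k : ℝ) ^ 2 * x ^ n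
      = x ^ k * ∑ r ∈ Finset.Icc 1 k, ∑ s ∈ Finset.Icc 1 k,
          A k r * A k s / (1 - (r : ℝ) * (s : ℝ) * x) := by
  classical
  have hk2 : (0 : ℝ) < (k : ℝ) ^ 2 := by positivity
  have hnorm : ∀ r ∈ Finset.Icc 1 k, ∀ s ∈ Finset.Icc 1 k, ‖(r : ℝ) * (s : ℝ) * x‖ < 1 := by
    intro r hr s hs
    rw [Finset.mem_Icc] at hr hs
    have hrk : (r : ℝ) ≤ (k : ℝ) := by exact_mod_cast hr.2
    have hsk : (s : ℝ) ≤ (k : ℝ) := by exact_mod_cast hs.2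
    have hr0 : (0 : ℝ) ≤ (r : ℝ) := by positivity
    have hs0 : (0 : ℝ) ≤ (s : ℝ) := by positivity
    have habs : ‖(r : ℝ) * (s : ℝ) * x‖ = ((r : ℝ) * (s : ℝ)) * |x| := by
      rw [Real.norm_eq_abs, abs_mul, abs_of_nonneg (by positivity : (0 : ℝ) ≤ (r : ℝ) * (s : ℝ))]
    rw [habs]
    have hxx := (lt_div_iff₀ hk2).mp hx
    have h2 : (r : ℝ) * (s : ℝ) ≤ (k : ℝ) ^ 2 := by nlinarith
    have h3 : (r : ℝ) * (s : ℝ) * |x| ≤ (k : ℝ) ^ 2 * |x| :=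
      mul_le_mul_of_nonneg_right h2 (abs_nonneg x)
    linarith
  set f : ℕ → ℝ := fun n => (stirling n k : ℝ) ^ 2 * x ^ n with hf
  set g : ℕ → ℕ → ℕ → ℝ :=
    fun r s m => A k r * A k s * x ^ k * ((r : ℝ) * (s : ℝ) * x) ^ m with hg
  have hsum_g : ∀ r ∈ Finset.Icc 1 k, ∀ s ∈ Finset.Icc 1 k, Summable (g r s) := by
    intro r hr s hs
    exact (summable_geometric_of_norm_lt_one (hnorm r hr s hs)).mul_left _
  have hfF : ∀ m, f (m + k) = ∑ r ∈ Finset.Icc 1 k, ∑ s ∈ Finset.Icc 1 k, g r s m := by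
    intro m
    have h1 : (stirling (m + k) k : ℝ) = ∑ r ∈ Finset.Icc 1 k, A k r * (r : ℝ) ^ m := by
      rw [stirling_formula k (m + k) hk (Nat.le_add_left k m)]
      simp
    show (stirling (m + k) k : ℝ) ^ 2 * x ^ (m + k) = _
    rw [h1, sq, Finset.sum_mul_sum, Finset.sum_mul]
    apply Finset.sum_congr rfl; intro r _
    rw [Finset.sum_mul]
    apply Finset.sum_congr rfl; intro s _
    show (A k r * (r : ℝ) ^ m) * (A k s * (s : ℝ) ^ m) * x ^ (m + k)
        = A k r * A k s * x ^ k * ((r : ℝ) * (s : ℝ) * x) ^ m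
    rw [mul_pow, mul_pow, pow_add]
    ring
  have hsumF : Summable (fun m => ∑ r ∈ Finset.Icc 1 k, ∑ s ∈ Finset.Icc 1 k, g r s m) :=
    summable_sum fun r hr => summable_sum fun s hs => hsum_g r hr s hs
  have hsumf : Summable f :=
    (summable_nat_add_iff k).mp (hsumF.congr fun m => (hfF m).symm)
  have hzero : ∀ i ∈ Finset.range k, f i = 0 := by
    intro i hi
    show (stirling i k : ℝ) ^ 2 * x ^ i = 0
    rw [stirling_eq_zero i k (Finset.mem_range.mp hi)]
    simp
  have hmain := Summable.sum_add_tsum_nat_add k hsumf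
  rw [Finset.sum_eq_zero hzero, zero_add] at hmain
  rw [← hmain]
  calc ∑' m, f (m + k)
      = ∑' m, ∑ r ∈ Finset.Icc 1 k, ∑ s ∈ Finset.Icc 1 k, g r s m := tsum_congr hfF
    _ = ∑ r ∈ Finset.Icc 1 k, ∑' m, ∑ s ∈ Finset.Icc 1 k, g r s m :=
        Summable.tsum_finsetSum fun r hr => summable_sum fun s hs => hsum_g r hr s hs
    _ = ∑ r ∈ Finset.Icc 1 k, ∑ s ∈ Finset.Icc 1 k, ∑' m, g r s m :=
        Finset.sum_congr rfl fun r hr => Summable.tsum_finsetSum fun s hs => hsum_g r hr s hs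
    _ = ∑ r ∈ Finset.Icc 1 k, ∑ s ∈ Finset.Icc 1 k,
          A k r * A k s * x ^ k * (1 - (r : ℝ) * (s : ℝ) * x)⁻¹ := by
        apply Finset.sum_congr rfl; intro r hr
        apply Finset.sum_congr rfl; intro s hs
        show ∑' m, A k r * A k s * x ^ k * ((r : ℝ) * (s : ℝ) * x) ^ m = _
        rw [tsum_mul_left, tsum_geometric_of_norm_lt_one (hnorm r hr s hs)]
    _ = x ^ k * ∑ r ∈ Finset.Icc 1 k, ∑ s ∈ Finset.Icc 1 k,
          A k r * A k s / (1 - (r : ℝ) * (s : ℝ) * x) := by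
        rw [Finset.mul_sum]
        apply Finset.sum_congr rfl; intro r _
        rw [Finset.mul_sum]
        apply Finset.sum_congr rfl; intro s _
        rw [div_eq_mul_inv]
        ring
end

section
/- For d = 2 the probability that two independent collectors of 2 coupons finish simultaneously equals 1/3, and for d = 3 it equals 11/70. -/
/-- `p n d = d! S(n-1,d-1)/d^n`, the probability of first completion at draw `n`. -/
noncomputable def p (n d : ℕ) : ℝ :=
  (Nat.factorial d : ℝ) * (stirling (n - 1) (d - 1) : ℝ) / (d : ℝ) ^ n

/-!
Since `S(0, d - 1) = 0` for `d ≥ 2`, the series starts at `n = 2`. From `S(n + 1, 1) = 1` and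
`S(n + 1, 2) = 2 ^ n - 1` we get `p (n + 2) 2 = (1/2) ^ (n + 1)` and
`p (n + 2) 3 = 2/3 * ((2/3) ^ n - (1/3) ^ n)`, whose squares are combinations of geometric
sequences: the sums are `(1/4) / (3/4) = 1/3` and `4/9 * (9/5 - 2 * 9/7 + 9/8) = 11/70`.
-/

lemma stirling_succ_one (n : ℕ) : stirling (n + 1) 1 = 1 := by
  induction n with
  | zero => rfl
  | succ n ih =>
    show 1 * stirling (n + 1) 1 + stirling (n + 1) 0 = 1
    rw [ih]
    rfl

lemma stirling_succ_two (n : ℕ) : (stirling (n + 1) 2 : ℝ) = 2 ^ n - 1 := by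
  induction n with
  | zero => norm_num [stirling]
  | succ n ih =>
    rw [stirling, Nat.cast_add, Nat.cast_mul, ih, stirling_succ_one]
    push_cast
    ring

lemma p_one {d : ℕ} (hd : 2 ≤ d) : p 1 d = 0 := by
  rw [p, Nat.sub_self, show d - 1 = d - 2 + 1 by omega, stirling, Nat.cast_zero, mul_zero,
    zero_div]

lemma p_two (n : ℕ) : p (n + 2) 2 = (1 / 2) ^ (n + 1) := by
  rw [p, show n + 2 - 1 = n + 1 from rfl, show 2 - 1 = 1 from rfl, stirling_succ_one,
    one_div, inv_pow]
  field_simp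
  rw [pow_succ]
  push_cast
  ring

lemma p_three (n : ℕ) : p (n + 2) 3 = 2 / 3 * ((2 / 3) ^ n - (1 / 3) ^ n) := by
  rw [p, show n + 2 - 1 = n + 1 from rfl, show 3 - 1 = 2 from rfl, stirling_succ_two,
    div_pow, div_pow, one_pow]
  field_simp
  push_cast [Nat.factorial]
  ring

lemma hasSum_sq_p_of_hasSum_shift {d : ℕ} (hd : 2 ≤ d) {s : ℝ}
    (h : HasSum (fun n => p (n + 2) d ^ 2) s) : HasSum (fun n => p (n + 1) d ^ 2) s := by
  have h' := h.zero_add (f := fun n => p (n + 1) d ^ 2)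
  rwa [zero_add, p_one hd, zero_pow two_ne_zero, zero_add] at h'

lemma hasSum_pow_succ_sq {r : ℝ} (h₀ : 0 ≤ r) (h₁ : r < 1) :
    HasSum (fun n : ℕ => (r ^ (n + 1)) ^ 2) (r ^ 2 * (1 - r ^ 2)⁻¹) := by
  have expand : (fun n : ℕ => (r ^ (n + 1)) ^ 2) = fun n => r ^ 2 * (r ^ 2) ^ n := by
    funext n
    ring
  rw [expand]
  exact (hasSum_geometric_of_lt_one (sq_nonneg r)
    (pow_lt_one₀ h₀ h₁ two_ne_zero)).mul_left _

lemma hasSum_pow_sub_pow_sq {a b : ℝ} (ha₀ : 0 ≤ a) (ha₁ : a < 1) (hb₀ : 0 ≤ b) (hb₁ : b < 1) :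
    HasSum (fun n : ℕ => (a ^ n - b ^ n) ^ 2)
      ((1 - a ^ 2)⁻¹ - 2 * (1 - a * b)⁻¹ + (1 - b ^ 2)⁻¹) := by
  have expand : (fun n : ℕ => (a ^ n - b ^ n) ^ 2) =
      fun n => (a ^ 2) ^ n - 2 * (a * b) ^ n + (b ^ 2) ^ n := by
    funext n
    ring
  rw [expand]
  have ha := hasSum_geometric_of_lt_one (sq_nonneg a) (pow_lt_one₀ ha₀ ha₁ two_ne_zero)
  have hab := hasSum_geometric_of_lt_one (mul_nonneg ha₀ hb₀)
    (mul_lt_one_of_nonneg_of_lt_one_left ha₀ ha₁ hb₁.le)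
  have hb := hasSum_geometric_of_lt_one (sq_nonneg b) (pow_lt_one₀ hb₀ hb₁ two_ne_zero)
  exact (ha.sub (hab.mul_left 2)).add hb

/-- For `d = 2`, two independent collectors finish simultaneously with probability `1/3`;
for `d = 3`, with probability `11/70`. -/
theorem simultaneous_completion_values :
    (∑' n : ℕ, p (n + 1) 2 ^ 2) = 1 / 3 ∧ (∑' n : ℕ, p (n + 1) 3 ^ 2) = 11 / 70 := by
  constructor
  · have h : HasSum (fun n => p (n + 2) 2 ^ 2) ((1 / 2) ^ 2 * (1 - (1 / 2) ^ 2)⁻¹) := by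
      simpa only [p_two] using hasSum_pow_succ_sq (r := 1 / 2) (by norm_num) (by norm_num)
    rw [(hasSum_sq_p_of_hasSum_shift le_rfl h).tsum_eq]
    norm_num
  · have h : HasSum (fun n => p (n + 2) 3 ^ 2)
        ((2 / 3) ^ 2 *
          ((1 - (2 / 3) ^ 2)⁻¹ - 2 * (1 - 2 / 3 * (1 / 3))⁻¹ + (1 - (1 / 3) ^ 2)⁻¹)) := by
      simpa only [p_three, mul_pow] using (hasSum_pow_sub_pow_sq (a := 2 / 3) (b := 1 / 3)
        (by norm_num) (by norm_num) (by norm_num) (by norm_num)).mul_left ((2 / 3) ^ 2)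
    rw [(hasSum_sq_p_of_hasSum_shift (by norm_num) h).tsum_eq]
    norm_num
end

section
/- For 1 ≤ d1 ≤ d and k ≥ d1, the sum of P(α)² over all monotone lattice paths α from (0,0) to (k,d1) (with steps east and northeast, where each northeast step from height j has weight 1 - j/d and each east step at height j has weight j/d, and P(α) is the product of the edge weights) equals (2·d!²)/((d-d1)!² d^{2k} (2d1)!) · Σ_{m=1}^{d1} (-1)^{d1-m} C(2d1, d1+m) m^{2k}. -/
/-- For a lattice path encoded by `s : Fin k → Bool` (`true` = northeast step,
`false` = east step), `height s i` is the height (number of distinct coupons) just before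
step `i`. -/
def height {k : ℕ} (s : Fin k → Bool) (i : Fin k) : ℕ :=
  (Finset.univ.filter fun j : Fin k => j < i ∧ s j = true).card

/-- The probability weight of step `i` of the path `s`, for a collector of `d` kinds:
a northeast step from height `j` has weight `1 - j/d`, an east step at height `j` has
weight `j/d`. -/
noncomputable def stepWeight (d : ℕ) {k : ℕ} (s : Fin k → Bool) (i : Fin k) : ℝ :=
  if s i then 1 - (height s i : ℝ) / (d : ℝ) else (height s i : ℝ) / (d : ℝ)

/-! Multiply the squared path sum over paths of length `k` ending at height `n` by `d^{2k}`
and divide it by the square of the falling factorial `d (d-1) ⋯ (d-n+1)`. Removing the last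
step of a path shows that the result `t(n, k)` satisfies `t(n, k+1) = n² t(n, k) + t(n-1, k)`,
the recurrence of the central factorial numbers `T(2k, 2n)`. These have the closed form
`(2n)! T(2k, 2n) = ∑_j (-1)^j C(2n, j) (j - n)^{2k}`, and for `k ≥ 1` the symmetry `j ↔ 2n - j`
folds this sum into `2 ∑_{m=1}^{n} (-1)^{n-m} C(2n, n+m) m^{2k}`. -/

open Finset Nat

theorem choose_succ_succ_mul_mul_sub (a i : ℕ) :
    (a + 2).choose (i + 1) * (i + 1) * (a + 1 - i) = (a + 2) * (a + 1) * a.choose i := by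
  rw [← add_one_mul_choose_eq, mul_assoc, ← choose_mul_succ_eq]
  ring

theorem sum_Icc_one_eq_sum_range {M : Type*} [AddCommMonoid M] (n : ℕ) (f : ℕ → M) :
    ∑ m ∈ Icc 1 n, f m = ∑ m ∈ range n, f (m + 1) := by
  rw [← Ico_add_one_right_eq_Icc, sum_Ico_eq_sum_range]
  simp [add_comm]

theorem sum_fun_fin_succ_eq_sum_snoc {M : Type*} [AddCommMonoid M] {k : ℕ} (f : (Fin (k + 1) → Bool) → M) :
    ∑ s, f s = ∑ t : Fin k → Bool, (f (Fin.snoc t true) + f (Fin.snoc t false)) := by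
  rw [← (Fin.snocEquiv fun _ ↦ Bool).sum_comp, Fintype.sum_prod_type, Fintype.sum_bool,
    ← sum_add_distrib]
  rfl

/-- `centralFactorial n k` is the central factorial number `T(2k, 2n)`. -/
def centralFactorial : ℕ → ℕ → ℕ
  | 0, 0 => 1
  | 0, _ + 1 => 0
  | _ + 1, 0 => 0
  | n + 1, k + 1 => (n + 1) ^ 2 * centralFactorial (n + 1) k + centralFactorial n k

section CentralDifference

variable (R : Type*) [CommRing R]

/-- The `2n`-th central difference of `x ↦ x ^ (2k)` at `0`. -/
def centralDiffPow (n k : ℕ) : R :=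
  ∑ j ∈ range (2 * n + 1), (-1) ^ j * ((2 * n).choose j : R) * ((j : R) - n) ^ (2 * k)

theorem centralDiffPow_zero_succ (k : ℕ) : centralDiffPow R 0 (k + 1) = 0 := by
  simp [centralDiffPow]

theorem centralDiffPow_zero_right (n : ℕ) : centralDiffPow R n 0 = if n = 0 then 1 else 0 := by
  have := congrArg (Int.cast (R := R)) (Int.alternating_sum_range_choose (n := 2 * n))
  push_cast at this
  simpa [centralDiffPow] using this

theorem centralDiffPow_succ_succ (n k : ℕ) :
    centralDiffPow R (n + 1) (k + 1) =
      (n + 1) ^ 2 * centralDiffPow R (n + 1) k + (2 * n + 2) * (2 * n + 1) * centralDiffPow R n k := by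
  set f : ℕ → R := fun j ↦
    (-1) ^ j * ((2 * n + 2).choose j : R) * ((j : R) - (n + 1)) ^ (2 * k) * (j * (j - (2 * n + 2)))
  -- `(j - (n+1))² - (n+1)² = j (j - 2n - 2)` kills the end terms and shifts the binomial index.
  have hdiff : centralDiffPow R (n + 1) (k + 1) - (n + 1) ^ 2 * centralDiffPow R (n + 1) k =
      ∑ j ∈ range (2 * n + 1 + 1 + 1), f j := by
    simp only [centralDiffPow, mul_sum, ← sum_sub_distrib, f, show 2 * (n + 1) = 2 * n + 2 by ring]
    refine sum_congr rfl fun j _ ↦ ?_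
    push_cast
    ring
  have hshift : ∀ i ∈ range (2 * n + 1),
      f (i + 1) = (2 * n + 2) * (2 * n + 1) *
        ((-1) ^ i * ((2 * n).choose i : R) * ((i : R) - n) ^ (2 * k)) := by
    intro i hi
    have hi : i ≤ 2 * n := Nat.lt_succ_iff.mp (mem_range.mp hi)
    have key : ((2 * n + 2).choose (i + 1) : R) * (i + 1) * (2 * n + 1 - i) =
        (2 * n + 2) * (2 * n + 1) * (2 * n).choose i := by
      have h := congrArg (Nat.cast (R := R)) (choose_succ_succ_mul_mul_sub (2 * n) i)
      push_cast [Nat.cast_sub (show i ≤ 2 * n + 1 by omega)] at h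
      exact h
    simp only [f]
    push_cast
    linear_combination ((-1 : R) ^ i * ((i : R) - n) ^ (2 * k)) * key
  rw [← sub_eq_iff_eq_add', hdiff, sum_range_succ', sum_range_succ, sum_congr rfl hshift,
    centralDiffPow, mul_sum]
  simp [f]
  ring

theorem factorial_mul_centralFactorial (n k : ℕ) :
    ((2 * n)! : R) * centralFactorial n k = centralDiffPow R n k := by
  induction k generalizing n with
  | zero => cases n <;> simp [centralFactorial, centralDiffPow_zero_right]
  | succ k ih =>
    cases n with
    | zero => simp [centralFactorial, centralDiffPow_zero_succ]
    | succ n =>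
      rw [centralDiffPow_succ_succ, ← ih, ← ih, centralFactorial,
        show 2 * (n + 1) = 2 * n + 1 + 1 by ring, factorial_succ, factorial_succ]
      push_cast
      ring

theorem centralDiffPow_eq_two_mul_sum {k : ℕ} (hk : k ≠ 0) (n : ℕ) :
    centralDiffPow R n k =
      2 * ∑ m ∈ Icc 1 n, (-1) ^ (n - m) * ((2 * n).choose (n + m) : R) * (m : R) ^ (2 * k) := by
  set g : ℕ → R := fun j ↦ (-1) ^ j * ((2 * n).choose j : R) * ((j : R) - n) ^ (2 * k)
  have hleft : ∀ m ∈ range n, g (n - 1 - m) = g (n + (m + 1)) := by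
    intro m hm
    have hm : m < n := mem_range.mp hm
    have hsign : (-1 : R) ^ (n - 1 - m) = (-1) ^ (n + (m + 1)) := by
      rw [show n + (m + 1) = n - 1 - m + 2 * (m + 1) by omega, pow_add, pow_mul]
      simp
    have hchoose : (2 * n).choose (n - 1 - m) = (2 * n).choose (n + (m + 1)) := by
      rw [show n - 1 - m = 2 * n - (n + (m + 1)) by omega, Nat.choose_symm (by omega)]
    have hbase : ((n - 1 - m : ℕ) : R) - n = -(((n + (m + 1) : ℕ) : R) - n) := by
      rw [show n - 1 - m = n - (m + 1) by omega, Nat.cast_sub (by omega)]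
      push_cast
      ring
    simp only [g]
    rw [hsign, hchoose, hbase, (even_two_mul k).neg_pow]
  have hright : ∀ m ∈ range n, g (n + (m + 1)) =
      (-1) ^ (n - (m + 1)) * ((2 * n).choose (n + (m + 1)) : R) * ((m + 1 : ℕ) : R) ^ (2 * k) := by
    intro m hm
    have hm : m < n := mem_range.mp hm
    have hsign : (-1 : R) ^ (n + (m + 1)) = (-1) ^ (n - (m + 1)) := by
      rw [show n + (m + 1) = n - (m + 1) + 2 * (m + 1) by omega, pow_add, pow_mul]
      simp
    simp only [g, hsign]
    push_cast
    ring
  have hmid : g (n + 0) = 0 := by simp [g, hk]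
  rw [show centralDiffPow R n k = ∑ j ∈ range (2 * n + 1), g j from rfl,
    show 2 * n + 1 = n + (n + 1) by ring, sum_range_add, sum_range_succ',
    ← sum_range_reflect, sum_congr rfl hleft, hmid, sum_Icc_one_eq_sum_range,
    sum_congr rfl hright]
  ring

end CentralDifference

def upCount {k : ℕ} (s : Fin k → Bool) : ℕ := (univ.filter fun i ↦ s i = true).card

noncomputable def pathWeight (d : ℕ) {k : ℕ} (s : Fin k → Bool) : ℝ := ∏ i, stepWeight d s i

noncomputable def sqPathSum (d n k : ℕ) : ℝ :=
  ∑ s ∈ univ.filter (fun s : Fin k → Bool ↦ upCount s = n), pathWeight d s ^ 2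

section Snoc

variable {k : ℕ} (t : Fin k → Bool) (b : Bool)

theorem upCount_snoc : upCount (Fin.snoc t b : Fin (k + 1) → Bool) = upCount t + b.toNat := by
  rw [upCount, upCount, card_filter, card_filter, Fin.sum_univ_castSucc]
  cases b <;> simp

theorem height_snoc_castSucc (i : Fin k) :
    height (Fin.snoc t b : Fin (k + 1) → Bool) i.castSucc = height t i := by
  rw [height, height, card_filter, card_filter, Fin.sum_univ_castSucc]
  simp [(Fin.castSucc_lt_last i).not_gt]

theorem height_snoc_last : height (Fin.snoc t b : Fin (k + 1) → Bool) (Fin.last k) = upCount t := by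
  rw [height, upCount, card_filter, card_filter, Fin.sum_univ_castSucc]
  simp [Fin.castSucc_lt_last]

theorem pathWeight_snoc (d : ℕ) :
    pathWeight d (Fin.snoc t b : Fin (k + 1) → Bool) =
      pathWeight d t * if b then 1 - (upCount t : ℝ) / d else (upCount t : ℝ) / d := by
  simp only [pathWeight, Fin.prod_univ_castSucc, stepWeight, height_snoc_castSucc,
    height_snoc_last, Fin.snoc_castSucc, Fin.snoc_last]

end Snoc

theorem sqPathSum_succ (d n k : ℕ) :
    sqPathSum d n (k + 1) = ∑ t : Fin k → Bool,
      ((if upCount t + 1 = n then (pathWeight d t * (1 - (upCount t : ℝ) / d)) ^ 2 else 0) +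
        if upCount t = n then (pathWeight d t * ((upCount t : ℝ) / d)) ^ 2 else 0) := by
  simp [sqPathSum, sum_filter, sum_fun_fin_succ_eq_sum_snoc, upCount_snoc, pathWeight_snoc]

theorem sqPathSum_zero_right (d n : ℕ) : sqPathSum d n 0 = if n = 0 then 1 else 0 := by
  rw [sqPathSum, sum_filter]
  simp [upCount, pathWeight, @eq_comm _ 0 n]

theorem sqPathSum_zero_succ (d k : ℕ) : sqPathSum d 0 (k + 1) = 0 := by
  simp +contextual [sqPathSum_succ]

theorem sqPathSum_succ_succ (d n k : ℕ) :
    sqPathSum d (n + 1) (k + 1) =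
      (1 - (n : ℝ) / d) ^ 2 * sqPathSum d n k + ((n + 1 : ℝ) / d) ^ 2 * sqPathSum d (n + 1) k := by
  rw [sqPathSum_succ, sum_add_distrib, sqPathSum, sqPathSum, sum_filter, sum_filter,
    Finset.mul_sum, Finset.mul_sum]
  congr 1 <;> refine sum_congr rfl fun t _ ↦ ?_ <;> split_ifs with h <;> simp_all <;> ring

theorem pow_mul_sqPathSum {d n : ℕ} (k : ℕ) (hn : n ≤ d) :
    (d : ℝ) ^ (2 * k) * sqPathSum d n k = (d.descFactorial n : ℝ) ^ 2 * centralFactorial n k := by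
  induction k generalizing n with
  | zero => cases n <;> simp [sqPathSum_zero_right, centralFactorial]
  | succ k ih =>
    cases n with
    | zero => simp [sqPathSum_zero_succ, centralFactorial]
    | succ n =>
      have hd : (d : ℝ) ≠ 0 := Nat.cast_ne_zero.mpr (by omega)
      have hsub : ((d - n : ℕ) : ℝ) = d - n := Nat.cast_sub (by omega)
      have ih₁ := ih (n := n) (by omega)
      have ih₂ := ih hn
      rw [descFactorial_succ] at ih₂ ⊢
      push_cast [hsub] at ih₂ ⊢
      rw [sqPathSum_succ_succ, centralFactorial]
      push_cast
      field_simp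
      linear_combination (d * (d - n) : ℝ) ^ 2 * ih₁ + (d * (n + 1) : ℝ) ^ 2 * ih₂

/-- For `1 ≤ d1 ≤ d` and `k ≥ d1`, the sum of `P(α)²` over all monotone lattice paths `α`
from `(0,0)` to `(k,d1)` equals
`(2 d!²)/((d-d1)!² d^{2k} (2d1)!) Σ_{m=1}^{d1} (-1)^{d1-m} C(2d1, d1+m) m^{2k}`. -/
theorem squared_path_sum (d d1 k : ℕ) (hd1 : 1 ≤ d1) (hd : d1 ≤ d) (hk : d1 ≤ k) :
    ∑ s ∈ Finset.univ.filter
        (fun s : Fin k → Bool => (Finset.univ.filter fun i => s i = true).card = d1),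
        (∏ i : Fin k, stepWeight d s i) ^ 2
      = 2 * (Nat.factorial d : ℝ) ^ 2 /
          ((Nat.factorial (d - d1) : ℝ) ^ 2 * (d : ℝ) ^ (2 * k) *
            (Nat.factorial (2 * d1) : ℝ)) *
          ∑ m ∈ Finset.Icc 1 d1,
            (-1 : ℝ) ^ (d1 - m) * (Nat.choose (2 * d1) (d1 + m) : ℝ) * (m : ℝ) ^ (2 * k) := by
  have hd0 : (d : ℝ) ≠ 0 := Nat.cast_ne_zero.mpr (by omega)
  have hpath := pow_mul_sqPathSum k hd
  have hclosed := factorial_mul_centralFactorial ℝ d1 k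
  rw [centralDiffPow_eq_two_mul_sum ℝ (by omega)] at hclosed
  have hdesc : ((d - d1)! : ℝ) * d.descFactorial d1 = d ! := by
    exact_mod_cast factorial_mul_descFactorial hd
  change sqPathSum d d1 k = _
  rw [← hdesc]
  field_simp
  linear_combination ((2 * d1)! : ℝ) * hpath + (d.descFactorial d1 : ℝ) ^ 2 * hclosed
end

section
/- For every integer h ≥ 1 and variable x with xD denoting the operator x·d/dx, the identity binom(xD - 1, h-1) applied to x^{h-1} e^{-t d / x} equals (t d)^{h-1}/(h-1)! · e^{-t d / x}, where binom(xD-1, h-1) f = (1/(h-1)!)(xD - 1)(xD - 2)···(xD - (h-1)) f. -/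
/-!
The factors `xD - i` commute on smooth functions, so `(xD - 1) ⋯ (xD - m)` may be applied with
the factor `xD - m` first. Since `(xD - k) (x^k e^{-c/x}) = c x^{k-1} e^{-c/x}`, each factor then
lowers the power of `x` by one and contributes a factor `c`, leaving `c^m e^{-c/x}`.
-/

/-- The operator `f ↦ (x d/dx - i) f` on functions of a real variable. -/
noncomputable def xDsub (i : ℕ) (f : ℝ → ℝ) : ℝ → ℝ :=
  fun x => x * deriv f x - (i : ℝ) * f x

/-- `opChain m f = (xD - m)(xD - (m-1)) ⋯ (xD - 1) f`. -/
noncomputable def opChain : ℕ → (ℝ → ℝ) → (ℝ → ℝ)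
  | 0, f => f
  | m + 1, f => xDsub (m + 1) (opChain m f)

open Set
open scoped ContDiff

lemma xDsub_const_mul (i : ℕ) (c : ℝ) (f : ℝ → ℝ) :
    xDsub i (fun y => c * f y) = fun y => c * xDsub i f y := by
  funext y
  simp only [xDsub, deriv_const_mul_field']
  ring

lemma opChain_const_mul (m : ℕ) (c : ℝ) (f : ℝ → ℝ) :
    opChain m (fun y => c * f y) = fun y => c * opChain m f y := by
  induction m with
  | zero => rfl
  | succ m ih => simp only [opChain, ih, xDsub_const_mul]

section OpenSet

variable {U : Set ℝ} {f g : ℝ → ℝ}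

lemma eqOn_xDsub (hU : IsOpen U) (i : ℕ) (hfg : EqOn f g U) :
    EqOn (xDsub i f) (xDsub i g) U := fun x hx => by
  simp only [xDsub, hfg hx, (hfg.eventuallyEq_of_mem (hU.mem_nhds hx)).deriv_eq]

lemma eqOn_opChain (hU : IsOpen U) (m : ℕ) (hfg : EqOn f g U) :
    EqOn (opChain m f) (opChain m g) U := by
  induction m with
  | zero => exact hfg
  | succ m ih => exact eqOn_xDsub hU (m + 1) ih

lemma ContDiffOn.xDsub (hU : IsOpen U) (i : ℕ) (hf : ContDiffOn ℝ ∞ f U) :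
    ContDiffOn ℝ ∞ (xDsub i f) U :=
  (contDiffOn_id.mul (hf.deriv_of_isOpen hU le_rfl)).sub (contDiffOn_const.mul hf)

lemma ContDiffOn.opChain (hU : IsOpen U) (m : ℕ) (hf : ContDiffOn ℝ ∞ f U) :
    ContDiffOn ℝ ∞ (opChain m f) U := by
  induction m with
  | zero => exact hf
  | succ m ih => exact ih.xDsub hU (m + 1)

lemma deriv_xDsub (hU : IsOpen U) (i : ℕ) (hf : ContDiffOn ℝ 2 f U) {x : ℝ} (hx : x ∈ U) :
    deriv (xDsub i f) x = x * deriv (deriv f) x + (1 - i) * deriv f x := by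
  have hf' : DifferentiableAt ℝ f x :=
    (hf.differentiableOn two_ne_zero).differentiableAt (hU.mem_nhds hx)
  have hf'' : DifferentiableAt ℝ (deriv f) x :=
    ((hf.deriv_of_isOpen hU (m := 1) (by norm_num)).differentiableOn one_ne_zero).differentiableAt
      (hU.mem_nhds hx)
  unfold xDsub
  rw [(((hasDerivAt_id' x).fun_mul hf''.hasDerivAt).fun_sub
    (hf'.hasDerivAt.const_mul (i : ℝ))).deriv]
  ring

lemma xDsub_comm (hU : IsOpen U) (i j : ℕ) (hf : ContDiffOn ℝ 2 f U) :
    EqOn (xDsub i (xDsub j f)) (xDsub j (xDsub i f)) U := fun x hx => by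
  have hi := deriv_xDsub hU i hf hx
  have hj := deriv_xDsub hU j hf hx
  simp only [xDsub] at hi hj ⊢
  rw [hi, hj]
  ring

lemma opChain_xDsub_comm (hU : IsOpen U) (m k : ℕ) (hf : ContDiffOn ℝ ∞ f U) :
    EqOn (opChain m (xDsub k f)) (xDsub k (opChain m f)) U := by
  induction m with
  | zero => exact fun _ _ => rfl
  | succ m ih =>
    intro x hx
    calc opChain (m + 1) (xDsub k f) x
        = xDsub (m + 1) (opChain m (xDsub k f)) x := rfl
      _ = xDsub (m + 1) (xDsub k (opChain m f)) x := eqOn_xDsub hU _ ih hx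
      _ = xDsub k (xDsub (m + 1) (opChain m f)) x :=
        xDsub_comm hU _ _ ((hf.opChain hU m).of_le ENat.LEInfty.out) hx
      _ = xDsub k (opChain (m + 1) f) x := rfl

end OpenSet

noncomputable def powMulExpNegDiv (c : ℝ) (k : ℕ) (y : ℝ) : ℝ :=
  y ^ k * Real.exp (-c / y)

lemma contDiffOn_powMulExpNegDiv (c : ℝ) (k : ℕ) :
    ContDiffOn ℝ ∞ (powMulExpNegDiv c k) (Ioi 0) := by
  unfold powMulExpNegDiv
  exact (contDiffOn_id.pow k).mul
    (contDiffOn_const.div contDiffOn_id fun y hy => (mem_Ioi.mp hy).ne').exp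

lemma xDsub_powMulExpNegDiv (c : ℝ) (k : ℕ) {x : ℝ} (hx : x ≠ 0) :
    xDsub (k + 1) (powMulExpNegDiv c (k + 1)) x = c * powMulExpNegDiv c k x := by
  have hexp : HasDerivAt (fun y => -c / y) (c / x ^ 2) x := by
    simpa [div_eq_mul_inv] using (hasDerivAt_inv hx).const_mul (-c)
  have hderiv : HasDerivAt (powMulExpNegDiv c (k + 1)) _ x :=
    (hasDerivAt_pow (k + 1) x).fun_mul hexp.exp
  rw [xDsub, hderiv.deriv]
  simp only [powMulExpNegDiv, Nat.add_sub_cancel]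
  field_simp
  push_cast
  ring

lemma opChain_powMulExpNegDiv (c : ℝ) (m : ℕ) :
    EqOn (opChain m (powMulExpNegDiv c m)) (fun y => c ^ m * Real.exp (-c / y)) (Ioi 0) := by
  induction m with
  | zero => simp [EqOn, opChain, powMulExpNegDiv]
  | succ m ih =>
    intro x hx
    calc opChain (m + 1) (powMulExpNegDiv c (m + 1)) x
        = opChain m (xDsub (m + 1) (powMulExpNegDiv c (m + 1))) x :=
          (opChain_xDsub_comm isOpen_Ioi m (m + 1) (contDiffOn_powMulExpNegDiv c _) hx).symm
      _ = opChain m (fun y => c * powMulExpNegDiv c m y) x :=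
          eqOn_opChain isOpen_Ioi m
            (fun y hy => xDsub_powMulExpNegDiv c m (mem_Ioi.mp hy).ne') hx
      _ = c ^ (m + 1) * Real.exp (-c / x) := by
          simp only [opChain_const_mul, ih hx, pow_succ]
          ring

theorem xD_binom_identity_general (h : ℕ) (t d x : ℝ) (hx : 0 < x) :
    (1 / (Nat.factorial (h - 1) : ℝ)) *
        opChain (h - 1) (fun y => y ^ (h - 1) * Real.exp (-(t * d) / y)) x
      = (t * d) ^ (h - 1) / (Nat.factorial (h - 1) : ℝ) * Real.exp (-(t * d) / x) := by
  rw [show (fun y => y ^ (h - 1) * Real.exp (-(t * d) / y)) = powMulExpNegDiv (t * d) (h - 1)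
    from rfl, opChain_powMulExpNegDiv (t * d) (h - 1) hx]
  ring

/-- For `h ≥ 1` and positive parameters `t`, `d`, and `x > 0`:
`binom(xD-1, h-1) (x^{h-1} e^{-td/x}) = ((td)^{h-1}/(h-1)!) e^{-td/x}`, where
`binom(xD-1,h-1) = (1/(h-1)!)(xD-1)(xD-2)⋯(xD-(h-1))`. -/
theorem xD_binom_identity (h : ℕ) (hh : 1 ≤ h) (t d x : ℝ) (ht : 0 < t) (hd : 0 < d)
    (hx : 0 < x) :
    (1 / (Nat.factorial (h - 1) : ℝ)) *
        opChain (h - 1) (fun y => y ^ (h - 1) * Real.exp (-(t * d) / y)) x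
      = (t * d) ^ (h - 1) / (Nat.factorial (h - 1) : ℝ) * Real.exp (-(t * d) / x) :=
  xD_binom_identity_general h t d x hx
end

section
/- Let S_{≥h}(n,k) denote the number of partitions of an n-set into k blocks each of size at least h. Then for 0 < t < 1/k, Σ_{n≥0} S_{≥h}(n,k) t^n = (1/(k! t)) ∫_0^∞ e^{-x/t} (e^x - 1 - x - ··· - x^{h-1}/(h-1)!)^k dx. -/
/-!
Labelling the `k` blocks identifies `k! · S_{≥h}(n,k)` with the number of maps `Fin n → Fin k`
all of whose fibres have at least `h` elements. Sorting these maps by their vector `g` of fibre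
sizes, orbit–stabilizer for the action of the permutations of `Fin n` counts each class as
`n! / ∏ gᵢ!`, which gives the exponential generating function
`∑ₙ k! S_{≥h}(n,k) xⁿ / n! = (eˣ - ∑_{i<h} xⁱ/i!)ᵏ`.
Integrating it term by term against `e^{-x/t}`, with `∫₀^∞ e^{-x/t} xⁿ dx = n! t^{n+1}`, turns it
into the ordinary generating function; the interchange is justified by `k! S_{≥h}(n,k) ≤ kⁿ` and
`k t < 1`.
-/

open MeasureTheory

/-- `Sge h n k` is the number of partitions of an `n`-set into exactly `k` blocks,
each block of size at least `h`. -/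
noncomputable def Sge (h n k : ℕ) : ℕ :=
  Nat.card {P : Finpartition (Finset.univ : Finset (Fin n)) //
    P.parts.card = k ∧ ∀ p ∈ P.parts, h ≤ p.card}

open Finset

namespace Finpartition

variable {α ι : Type*} [Fintype α] [DecidableEq α]

def labelledFun (P : Finpartition (univ : Finset α)) (σ : P.parts ≃ ι) (a : α) : ι :=
  σ ⟨P.part a, P.part_mem.2 (mem_univ a)⟩

variable {P Q : Finpartition (univ : Finset α)} {σ : P.parts ≃ ι} {τ : Q.parts ≃ ι}

lemma labelledFun_eq_iff {a : α} {i : ι} :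
    P.labelledFun σ a = i ↔ a ∈ (σ.symm i : Finset α) := by
  rw [labelledFun, ← Equiv.eq_symm_apply, Subtype.ext_iff, P.part_eq_iff_mem (σ.symm i).2]

lemma filter_labelledFun_eq [DecidableEq ι] (i : ι) :
    ({a | P.labelledFun σ a = i} : Finset α) = σ.symm i := by
  ext a
  simp [labelledFun_eq_iff]

lemma mem_parts_iff_exists_symm_eq (σ : P.parts ≃ ι) {p : Finset α} :
    p ∈ P.parts ↔ ∃ i, (σ.symm i : Finset α) = p :=
  ⟨fun hp => ⟨σ ⟨p, hp⟩, by simp⟩, fun ⟨i, hi⟩ => hi ▸ (σ.symm i).2⟩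

lemma symm_apply_eq_of_labelledFun_eq (h : P.labelledFun σ = Q.labelledFun τ) (i : ι) :
    (σ.symm i : Finset α) = τ.symm i := by
  ext a
  rw [← labelledFun_eq_iff, ← labelledFun_eq_iff, h]

lemma eq_of_labelledFun_eq (h : P.labelledFun σ = Q.labelledFun τ) : P = Q := by
  ext p
  simp only [mem_parts_iff_exists_symm_eq σ, mem_parts_iff_exists_symm_eq τ,
    symm_apply_eq_of_labelledFun_eq h]

lemma labelledFun_injective : Function.Injective (P.labelledFun : (P.parts ≃ ι) → α → ι) :=
  fun _ _ h => Equiv.symm_bijective.injective <|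
    Equiv.ext fun i => Subtype.ext (symm_apply_eq_of_labelledFun_eq h i)

lemma exists_labelledFun_eq [DecidableEq ι] {f : α → ι} (hf : Function.Surjective f) :
    ∃ (P : Finpartition (univ : Finset α)) (σ : P.parts ≃ ι), P.labelledFun σ = f := by
  let P := ofSetoid (Setoid.ker f)
  have part_eq (a : α) : P.part a = ({b | f b = f a} : Finset α) := by
    ext b
    simp [P, mem_part_ofSetoid_iff_rel, Setoid.ker_def, eq_comm]
  let fiber (i : ι) : P.parts := ⟨({a | f a = i} : Finset α), by
    obtain ⟨a, rfl⟩ := hf i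
    exact part_eq a ▸ P.part_mem.2 (mem_univ a)⟩
  have hfiber : Function.Bijective fiber := by
    refine ⟨fun i j hij => ?_, fun ⟨p, hp⟩ => ?_⟩
    · obtain ⟨a, rfl⟩ := hf i
      have : a ∈ (fiber j : Finset α) := hij ▸ by simp [fiber]
      simpa [fiber] using this
    · obtain ⟨a, -, rfl⟩ := P.part_surjOn hp
      exact ⟨f a, Subtype.ext (part_eq a).symm⟩
  refine ⟨P, (Equiv.ofBijective fiber hfiber).symm, funext fun a => ?_⟩
  rw [labelledFun_eq_iff, Equiv.symm_symm]
  simp [fiber]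

end Finpartition

section FiberCard

variable {α ι : Type*} [Fintype α] [DecidableEq ι]

def fiberCard (f : α → ι) (i : ι) : ℕ := #{a | f a = i}

lemma fiberCard_eq_fiberCard_iff {f f' : α → ι} :
    fiberCard f' = fiberCard f ↔ ∃ σ : Equiv.Perm α, f ∘ σ = f' := by
  simp only [funext_iff (f := fiberCard f'), fiberCard, ← Fintype.card_subtype]
  constructor
  · intro h
    exact ⟨Equiv.ofFiberEquiv fun i => Fintype.equivOfCardEq (h i),
      funext (Equiv.ofFiberEquiv_map _)⟩
  · rintro ⟨σ, rfl⟩ i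
    exact Fintype.card_congr (σ.subtypeEquiv fun _ => Iff.rfl)

lemma Finpartition.fiberCard_labelledFun [DecidableEq α] {P : Finpartition (univ : Finset α)}
    (σ : P.parts ≃ ι) (i : ι) : fiberCard (P.labelledFun σ) i = #(σ.symm i : Finset α) :=
  congrArg card (Finpartition.filter_labelledFun_eq i)

variable [Fintype ι]

lemma sum_fiberCard (f : α → ι) : ∑ i, fiberCard f i = Fintype.card α :=
  (card_eq_sum_card_fiberwise fun a _ => mem_coe.2 (mem_univ (f a))).symm

lemma exists_fiberCard_eq {g : ι → ℕ} (hg : ∑ i, g i = Fintype.card α) :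
    ∃ f : α → ι, fiberCard f = g := by
  let e : α ≃ Σ i, Fin (g i) := Fintype.equivOfCardEq (by simp [hg])
  refine ⟨fun a => (e a).1, funext fun i => ?_⟩
  rw [fiberCard, ← Fintype.card_subtype,
    Fintype.card_congr ((e.subtypeEquiv fun _ => Iff.rfl).trans (Equiv.sigmaSubtype i)),
    Fintype.card_fin]

variable [DecidableEq α]

theorem card_fiberCard_ge_eq_factorial_mul {h : ℕ} (hh : 1 ≤ h) :
    #{f : α → ι | ∀ i, h ≤ fiberCard f i} = (Fintype.card ι).factorial *
      Nat.card {P : Finpartition (univ : Finset α) //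
        #P.parts = Fintype.card ι ∧ ∀ p ∈ P.parts, h ≤ #p} := by
  let Φ (x : Σ P : {P : Finpartition (univ : Finset α) //
        #P.parts = Fintype.card ι ∧ ∀ p ∈ P.parts, h ≤ #p}, P.1.parts ≃ ι) :
      {f : α → ι // ∀ i, h ≤ fiberCard f i} :=
    ⟨x.1.1.labelledFun x.2, fun i => by
      rw [Finpartition.fiberCard_labelledFun]; exact x.1.2.2 _ (x.2.symm i).2⟩
  have hΦ : Function.Bijective Φ := by
    refine ⟨fun ⟨⟨P, _⟩, σ⟩ ⟨⟨Q, _⟩, τ⟩ hΦ => ?_, fun ⟨f, hf⟩ => ?_⟩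
    · have hf : P.labelledFun σ = Q.labelledFun τ := congrArg Subtype.val hΦ
      obtain rfl := Finpartition.eq_of_labelledFun_eq hf
      obtain rfl := Finpartition.labelledFun_injective hf
      rfl
    · have hsurj : Function.Surjective f := fun i => by
        simpa [fiberCard, Finset.Nonempty] using card_pos.1 (hh.trans (hf i))
      obtain ⟨P, σ, rfl⟩ := Finpartition.exists_labelledFun_eq hsurj
      refine ⟨⟨⟨P, ?_, fun p hp => ?_⟩, σ⟩, rfl⟩
      · rw [← Fintype.card_coe, Fintype.card_congr σ]
      · simpa [Finpartition.fiberCard_labelledFun] using hf (σ ⟨p, hp⟩)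
  rw [← Fintype.card_subtype, ← Nat.card_eq_fintype_card,
    ← Nat.card_congr (Equiv.ofBijective Φ hΦ), Nat.card_sigma, sum_const_nat fun P _ => ?_,
    card_univ, Nat.card_eq_fintype_card, mul_comm]
  have hP : Fintype.card P.1.parts = Fintype.card ι := by rw [Fintype.card_coe, P.2.1]
  rw [Nat.card_eq_fintype_card, Fintype.card_equiv (Fintype.equivOfCardEq hP), hP]

theorem card_fiberCard_eq_mul_prod_factorial (f : α → ι) :
    #{f' : α → ι | fiberCard f' = fiberCard f} * ∏ i, (fiberCard f i).factorial =
      (Fintype.card α).factorial := by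
  have horbit : MulAction.orbit (Equiv.Perm α)ᵈᵐᵃ f =
      ↑({f' : α → ι | fiberCard f' = fiberCard f} : Finset (α → ι)) := by
    ext f'
    rw [MulAction.mem_orbit_iff, mem_coe, mem_filter_univ, fiberCard_eq_fiberCard_iff]
    exact ⟨fun ⟨c, hc⟩ => ⟨DomMulAct.mk.symm c, hc⟩, fun ⟨σ, hσ⟩ => ⟨DomMulAct.mk σ, hσ⟩⟩
  have hstab : Nat.card (MulAction.stabilizer (Equiv.Perm α)ᵈᵐᵃ f) =
      ∏ i, (fiberCard f i).factorial := by
    rw [Nat.card_congr (Equiv.subtypeEquiv (q := fun σ : Equiv.Perm α => f ∘ σ = f)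
        DomMulAct.mk.symm fun _ => DomMulAct.mem_stabilizer_iff),
      Nat.card_eq_fintype_card, DomMulAct.stabilizer_card]
    simp [fiberCard, Fintype.card_subtype]
  rw [← hstab, ← Fintype.card_perm, ← Nat.card_eq_fintype_card,
    Nat.card_congr (DomMulAct.mk : Equiv.Perm α ≃ _),
    ← Nat.card_congr (MulAction.orbitProdStabilizerEquivGroup (Equiv.Perm α)ᵈᵐᵃ f),
    Nat.card_prod, horbit, Nat.card_coe_set_eq, Set.ncard_coe_finset]

theorem card_fiberCard_eq_multinomial {g : ι → ℕ} (hg : ∑ i, g i = Fintype.card α) :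
    #{f : α → ι | fiberCard f = g} = Nat.multinomial univ g := by
  obtain ⟨f, rfl⟩ := exists_fiberCard_eq hg
  refine Nat.eq_of_mul_eq_mul_right (m := ∏ i, (fiberCard f i).factorial)
    (prod_pos fun i _ => Nat.factorial_pos _) ?_
  rw [card_fiberCard_eq_mul_prod_factorial, mul_comm, Nat.multinomial_spec, sum_fiberCard]

end FiberCard

section ProdPow

variable {R β : Type*} [NormedCommRing R] {c : β → R}

lemma summable_norm_tsum_pow (hc : Summable (‖c ·‖)) :
    ∀ k : ℕ, Summable fun g : Fin k → β => ‖∏ i, c (g i)‖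
  | 0 => Summable.of_finite
  | k + 1 => by
    rw [← (Fin.consEquiv fun _ => β).summable_iff]
    simpa [Function.comp_def, Fin.prod_univ_succ] using
      hc.mul_norm (summable_norm_tsum_pow hc k)

lemma hasSum_tsum_pow [CompleteSpace R] (hc : Summable (‖c ·‖)) :
    ∀ k : ℕ, HasSum (fun g : Fin k → β => ∏ i, c (g i)) ((∑' b, c b) ^ k)
  | 0 => by simp
  | k + 1 => by
    rw [← (Fin.consEquiv fun _ => β).hasSum_iff, pow_succ',
      (hasSum_tsum_pow hc k).tsum_eq.symm,
      tsum_mul_tsum_of_summable_norm hc (summable_norm_tsum_pow hc k)]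
    simpa [Function.comp_def, Fin.prod_univ_succ] using
      (hc.mul_norm (summable_norm_tsum_pow hc k)).of_norm.hasSum

end ProdPow

noncomputable def expTailCoeff (h m : ℕ) : ℝ := if h ≤ m then (m.factorial : ℝ)⁻¹ else 0

lemma expTailCoeff_nonneg (h m : ℕ) : 0 ≤ expTailCoeff h m := by
  unfold expTailCoeff; split_ifs <;> positivity

lemma hasSum_expTailCoeff_mul_pow (h : ℕ) (x : ℝ) :
    HasSum (fun m => expTailCoeff h m * x ^ m)
      (Real.exp x - ∑ i ∈ range h, x ^ i / (i.factorial : ℝ)) := by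
  have hexp : HasSum (fun m => x ^ m / (m.factorial : ℝ)) (Real.exp x) := by
    simpa [Real.exp_eq_exp_ℝ] using NormedSpace.expSeries_div_hasSum_exp x
  have htaylor := hasSum_sum_of_ne_finset_zero (L := SummationFilter.unconditional ℕ)
    (f := fun m => if m < h then x ^ m / (m.factorial : ℝ) else 0) (s := range h)
    fun m hm => if_neg (by simpa using hm)
  rw [sum_ite_of_true fun m hm => mem_range.1 hm] at htaylor
  have hcoeff : (fun m => x ^ m / (m.factorial : ℝ) - if m < h then x ^ m / m.factorial else 0) =
      fun m => expTailCoeff h m * x ^ m := by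
    funext m
    unfold expTailCoeff
    split_ifs <;> first | omega | ring
  exact hcoeff ▸ hexp.sub htaylor

section Laplace

open Real

variable {t : ℝ}

lemma integral_exp_neg_div_mul_pow (ht : 0 < t) (n : ℕ) :
    ∫ x in Set.Ioi 0, exp (-x / t) * x ^ n = n.factorial * t ^ (n + 1) := by
  have h := integral_rpow_mul_exp_neg_mul_Ioi (a := n + 1) (r := t⁻¹)
    (by positivity) (by positivity)
  rw [add_sub_cancel_right, one_div, inv_inv, Gamma_nat_eq_factorial, ← Nat.cast_succ,
    rpow_natCast] at h
  rw [mul_comm, ← h]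
  refine setIntegral_congr_fun measurableSet_Ioi fun x _ => ?_
  rw [rpow_natCast, neg_div, inv_mul_eq_div, mul_comm]

lemma integrableOn_exp_neg_div_mul_pow (ht : 0 < t) (n : ℕ) :
    IntegrableOn (fun x : ℝ => exp (-x / t) * x ^ n) (Set.Ioi 0) :=
  Integrable.of_integral_ne_zero <| by rw [integral_exp_neg_div_mul_pow ht]; positivity

lemma integral_exp_neg_div_mul_of_hasSum (ht : 0 < t) {a : ℕ → ℝ} {f : ℝ → ℝ}
    (hf : ∀ x, HasSum (fun n => a n * x ^ n) (f x))
    (ha : Summable fun n => ‖a n‖ * (n.factorial * t ^ (n + 1))) :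
    ∫ x in Set.Ioi 0, exp (-x / t) * f x = ∑' n, a n * (n.factorial * t ^ (n + 1)) := by
  have hnorm (n : ℕ) : ∫ x in Set.Ioi 0, ‖a n * (exp (-x / t) * x ^ n)‖ =
      ‖a n‖ * (n.factorial * t ^ (n + 1)) := by
    rw [← integral_exp_neg_div_mul_pow ht n, ← integral_const_mul]
    refine setIntegral_congr_fun measurableSet_Ioi fun x (hx : 0 < x) => ?_
    rw [norm_mul, norm_of_nonneg (by positivity : 0 ≤ exp (-x / t) * x ^ n)]
  calc ∫ x in Set.Ioi 0, exp (-x / t) * f x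
      = ∫ x in Set.Ioi 0, ∑' n, a n * (exp (-x / t) * x ^ n) := by
        congr 1 with x
        rw [← (hf x).tsum_eq, ← tsum_mul_left]
        exact tsum_congr fun n => by ring
    _ = ∑' n, ∫ x in Set.Ioi 0, a n * (exp (-x / t) * x ^ n) :=
        (integral_tsum_of_summable_integral_norm
          (fun n => (integrableOn_exp_neg_div_mul_pow ht n).const_mul (a n))
          (by simpa only [hnorm] using ha)).symm
    _ = ∑' n, a n * (n.factorial * t ^ (n + 1)) := by
        simp only [integral_const_mul, integral_exp_neg_div_mul_pow ht]

end Laplace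

section Sge

variable {h n k : ℕ}

lemma factorial_mul_Sge (hh : 1 ≤ h) :
    k.factorial * Sge h n k = #{f : Fin n → Fin k | ∀ i, h ≤ fiberCard f i} := by
  convert (card_fiberCard_ge_eq_factorial_mul (α := Fin n) (ι := Fin k) hh).symm using 3 <;>
    simp [Sge]

lemma factorial_mul_Sge_le_pow (hh : 1 ≤ h) : k.factorial * Sge h n k ≤ k ^ n := by
  rw [factorial_mul_Sge hh]
  exact (card_filter_le _ _).trans (by simp)

lemma factorial_mul_Sge_div_factorial (hh : 1 ≤ h) :
    (k.factorial * Sge h n k : ℝ) / n.factorial =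
      ∑ g ∈ Nat.antidiagonalTuple k n, ∏ i, expTailCoeff h (g i) := by
  rw [← Nat.cast_mul, factorial_mul_Sge hh, card_eq_sum_card_fiberwise (f := fiberCard)
    (t := Nat.antidiagonalTuple k n) fun f _ => by
      rw [mem_coe, Nat.mem_antidiagonalTuple, sum_fiberCard, Fintype.card_fin],
    Nat.cast_sum, sum_div]
  refine sum_congr rfl fun g hg => ?_
  rw [Nat.mem_antidiagonalTuple] at hg
  by_cases hgh : ∀ i, h ≤ g i
  · rw [filter_filter, filter_congr fun f _ => and_iff_right_of_imp fun hf => hf ▸ hgh,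
      card_fiberCard_eq_multinomial (by simpa using hg)]
    have hspec := Nat.multinomial_spec univ g
    rw [hg] at hspec
    simp only [expTailCoeff, if_pos (hgh _), prod_inv_distrib]
    rw [div_eq_iff (by positivity), ← hspec]
    push_cast
    field_simp
  · obtain ⟨i, hi⟩ := not_forall.1 hgh
    rw [prod_eq_zero (mem_univ i) (if_neg hi), filter_filter,
      filter_false_of_mem fun f _ ⟨hf, hfg⟩ => hi (hfg ▸ hf i), card_empty,
      Nat.cast_zero, zero_div]

theorem hasSum_factorial_mul_Sge_div_factorial_mul_pow (hh : 1 ≤ h) (x : ℝ) :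
    HasSum (fun n => (k.factorial * Sge h n k : ℝ) / n.factorial * x ^ n)
      ((Real.exp x - ∑ i ∈ range h, x ^ i / (i.factorial : ℝ)) ^ k) := by
  set c : ℕ → ℝ := fun m => expTailCoeff h m * x ^ m
  have hc : Summable (‖c ·‖) := (hasSum_expTailCoeff_mul_pow h |x|).summable.congr fun m => by
    simp [c, abs_of_nonneg (expTailCoeff_nonneg h m)]
  have hprod := hasSum_tsum_pow hc k
  rw [(hasSum_expTailCoeff_mul_pow h x).tsum_eq,
    ← (Equiv.sigmaFiberEquiv fun g : Fin k → ℕ => ∑ i, g i).hasSum_iff] at hprod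
  refine hprod.sigma fun n => ?_
  have hfiber : ∑ g ∈ Nat.antidiagonalTuple k n, ∏ i, c (g i) =
      (k.factorial * Sge h n k : ℝ) / n.factorial * x ^ n := by
    rw [factorial_mul_Sge_div_factorial hh, sum_mul]
    refine sum_congr rfl fun g hg => ?_
    rw [prod_mul_distrib, prod_pow_eq_pow_sum, Nat.mem_antidiagonalTuple.1 hg]
  exact hfiber ▸ (Equiv.subtypeEquivRight fun g => Nat.mem_antidiagonalTuple).hasSum_iff.1
    ((Nat.antidiagonalTuple k n).hasSum _)

end Sge

theorem Sge_ogf_integral_general (h k : ℕ) (hh : 1 ≤ h) (t : ℝ) (ht : 0 < t)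
    (htk : t < 1 / (k : ℝ)) :
    ∑' n : ℕ, (Sge h n k : ℝ) * t ^ n
      = (1 / ((Nat.factorial k : ℝ) * t)) *
          ∫ x in Set.Ioi (0 : ℝ),
            Real.exp (-x / t) *
              (Real.exp x - ∑ i ∈ Finset.range h, x ^ i / (Nat.factorial i : ℝ)) ^ k := by
  have hkt : (k : ℝ) * t < 1 := by
    rcases (Nat.cast_nonneg k : (0 : ℝ) ≤ k).eq_or_lt with hk | hk
    · simp [← hk]
    · rwa [lt_div_iff₀ hk, mul_comm] at htk
  have hsummable : Summable fun n =>
      ‖(k.factorial * Sge h n k : ℝ) / n.factorial‖ * (n.factorial * t ^ (n + 1)) := by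
    refine .of_nonneg_of_le (fun n => by positivity) (fun n => ?_)
      ((summable_geometric_of_lt_one (by positivity) hkt).mul_left t)
    calc ‖(k.factorial * Sge h n k : ℝ) / n.factorial‖ * (n.factorial * t ^ (n + 1))
        = (k.factorial * Sge h n k : ℝ) * t ^ (n + 1) := by
          rw [Real.norm_of_nonneg (by positivity)]; field_simp
      _ ≤ (k : ℝ) ^ n * t ^ (n + 1) := by
          gcongr; exact_mod_cast factorial_mul_Sge_le_pow hh
      _ = t * ((k : ℝ) * t) ^ n := by ring
  rw [integral_exp_neg_div_mul_of_hasSum ht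
    (hasSum_factorial_mul_Sge_div_factorial_mul_pow hh) hsummable, ← tsum_mul_left]
  refine tsum_congr fun n => ?_
  field_simp
  ring

/-- For `0 < t < 1/k`,
`Σ_{n≥0} S_{≥h}(n,k) t^n = (1/(k! t)) ∫_0^∞ e^{-x/t}(e^x - 1 - x - ⋯ - x^{h-1}/(h-1)!)^k dx`. -/
theorem Sge_ogf_integral (h k : ℕ) (hh : 1 ≤ h) (hk : 1 ≤ k) (t : ℝ) (ht : 0 < t)
    (htk : t < 1 / (k : ℝ)) :
    ∑' n : ℕ, (Sge h n k : ℝ) * t ^ n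
      = (1 / ((Nat.factorial k : ℝ) * t)) *
          ∫ x in Set.Ioi (0 : ℝ),
            Real.exp (-x / t) *
              (Real.exp x - ∑ i ∈ Finset.range h, x ^ i / (Nat.factorial i : ℝ)) ^ k :=
  Sge_ogf_integral_general h k hh t ht htk
end

section
/- In the coupon collector problem with d kinds where the collector stops upon having at least h copies of every kind, the probability of stopping at exactly trial n is p_n = (d!/d^n) · C(n-1, h-1) · S_{≥h}(n-h, d-1), where S_{≥h}(m,k) counts partitions of an m-set into k blocks each of size at least h. -/
open Finset Fintype
open scoped Nat

theorem card_eq_card_mul_of_card_fiber_eq {X Y : Type*} [Finite X] [Fintype Y] (f : X → Y)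
    {m : ℕ} (hf : ∀ y, Nat.card {x // f x = y} = m) : Nat.card X = Nat.card Y * m := by
  rw [← Nat.card_congr (Equiv.sigmaFiberEquiv f), Nat.card_sigma, sum_congr rfl fun y _ => hf y,
    sum_const, card_univ, smul_eq_mul, Nat.card_eq_fintype_card]

theorem injective_fiber_of_surjective {α β : Type*} [Fintype α] [DecidableEq β] {g : α → β}
    (hg : Function.Surjective g) : Function.Injective fun b => ({a | g a = b} : Finset α) := by
  intro b b' hbb'
  obtain ⟨a, rfl⟩ := hg b
  simpa using Finset.ext_iff.1 hbb' a

namespace Finpartition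

variable {α β : Type*} [Fintype α] [DecidableEq α] [DecidableEq β]

noncomputable def ofFibers (g : α → β) : Finpartition (univ : Finset α) :=
  ofSetoid (Setoid.ker g)

theorem part_ofFibers (g : α → β) (a : α) :
    (ofFibers g).part a = ({x | g x = g a} : Finset α) := by
  ext x
  rw [ofFibers, mem_part_ofSetoid_iff_rel]
  simp [eq_comm]

theorem mem_parts_ofFibers {g : α → β} (hg : Function.Surjective g) {p : Finset α} :
    p ∈ (ofFibers g).parts ↔ ∃ b, ({a | g a = b} : Finset α) = p := by
  constructor
  · intro hp
    obtain ⟨a, -, rfl⟩ := (ofFibers g).part_surjOn hp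
    exact ⟨g a, (part_ofFibers g a).symm⟩
  · rintro ⟨b, rfl⟩
    obtain ⟨a, rfl⟩ := hg b
    exact part_ofFibers g a ▸ (ofFibers g).part_mem.2 (mem_univ a)

theorem card_parts_ofFibers [Fintype β] {g : α → β} (hg : Function.Surjective g) :
    #(ofFibers g).parts = card β := by
  have : (ofFibers g).parts = univ.image fun b => ({a | g a = b} : Finset α) := by
    ext p
    simp [mem_parts_ofFibers hg]
  rw [this, card_image_of_injective _ (injective_fiber_of_surjective hg), card_univ]

noncomputable def label (P : Finpartition (univ : Finset α)) (e : β ≃ P.parts) (a : α) : β :=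
  e.symm ⟨P.part a, P.part_mem.2 (mem_univ a)⟩

theorem fiber_label (P : Finpartition (univ : Finset α)) (e : β ≃ P.parts) (b : β) :
    ({a | P.label e a = b} : Finset α) = e b := by
  ext a
  simp only [mem_filter, mem_univ, true_and, label, Equiv.symm_apply_eq, Subtype.ext_iff]
  exact ⟨fun h => h ▸ P.mem_part (mem_univ a), P.part_eq_of_mem (e b).2⟩

theorem label_surjective (P : Finpartition (univ : Finset α)) (e : β ≃ P.parts) :
    Function.Surjective (P.label e) := by
  intro b
  obtain ⟨a, ha⟩ := P.nonempty_of_mem_parts (e b).2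
  rw [← P.fiber_label e b, mem_filter] at ha
  exact ⟨a, ha.2⟩

theorem ofFibers_label (P : Finpartition (univ : Finset α)) (e : β ≃ P.parts) :
    ofFibers (P.label e) = P := by
  ext p
  rw [mem_parts_ofFibers (P.label_surjective e)]
  simp only [P.fiber_label]
  exact ⟨fun ⟨b, hb⟩ => hb ▸ (e b).2, fun hp => ⟨e.symm ⟨p, hp⟩, by simp⟩⟩

noncomputable def labelingEquiv (P : Finpartition (univ : Finset α)) :
    {g : α → β // Function.Surjective g ∧ ofFibers g = P} ≃ (β ≃ P.parts) where
  toFun g := Equiv.ofBijective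
    (fun b => ⟨({a | g.1 a = b} : Finset α), by
      simpa only [g.2.2] using (mem_parts_ofFibers g.2.1).2 ⟨b, rfl⟩⟩)
    ⟨fun b b' hbb' => injective_fiber_of_surjective g.2.1 (congrArg Subtype.val hbb'), by
      rintro ⟨p, hp⟩
      rw [← g.2.2, mem_parts_ofFibers g.2.1] at hp
      obtain ⟨b, rfl⟩ := hp
      exact ⟨b, rfl⟩⟩
  invFun e := ⟨P.label e, P.label_surjective e, P.ofFibers_label e⟩
  left_inv g := by
    obtain ⟨g, hg, rfl⟩ := g
    ext a
    simp only [label, Equiv.symm_apply_eq]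
    exact Subtype.ext (part_ofFibers g a)
  right_inv e := by
    ext b : 1
    exact Subtype.ext (P.fiber_label e b)

end Finpartition

abbrev LargeBlockPartitions (α : Type*) [Fintype α] [DecidableEq α] (h k : ℕ) : Type _ :=
  {P : Finpartition (univ : Finset α) // #P.parts = k ∧ ∀ p ∈ P.parts, h ≤ #p}

theorem card_fibers_ge_eq_factorial_mul_card_partitions {α β : Type*} [Fintype α]
    [DecidableEq α] [Fintype β] [DecidableEq β] {h : ℕ} (hh : 1 ≤ h) :
    Nat.card {g : α → β // ∀ b, h ≤ #{a | g a = b}} =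
      (card β)! * Nat.card (LargeBlockPartitions α h (card β)) := by
  have surjective {g : α → β} (hg : ∀ b, h ≤ #{a | g a = b}) : Function.Surjective g := by
    intro b
    obtain ⟨a, ha⟩ := card_pos.1 (hh.trans (hg b))
    exact ⟨a, (mem_filter.1 ha).2⟩
  have blocks_ge {g : α → β} (hg : ∀ b, h ≤ #{a | g a = b}) :
      ∀ p ∈ (Finpartition.ofFibers g).parts, h ≤ #p := by
    intro p hp
    obtain ⟨b, rfl⟩ := (Finpartition.mem_parts_ofFibers (surjective hg)).1 hp
    exact hg b
  rw [mul_comm, card_eq_card_mul_of_card_fiber_eq fun g =>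
    (⟨Finpartition.ofFibers g.1, Finpartition.card_parts_ofFibers (surjective g.2),
      blocks_ge g.2⟩ : LargeBlockPartitions α h _)]
  intro P
  calc _ = Nat.card {g : {g : α → β // ∀ b, h ≤ #{a | g a = b}} //
          Finpartition.ofFibers g.1 = P.1} :=
        Nat.card_congr (Equiv.subtypeEquivRight fun _ => Subtype.ext_iff)
    _ = Nat.card {g : α → β // Function.Surjective g ∧ Finpartition.ofFibers g = P.1} :=
        Nat.card_congr <|
          (Equiv.subtypeSubtypeEquivSubtypeInter _ (Finpartition.ofFibers · = P.1)).trans <|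
          Equiv.subtypeEquivRight fun g => ⟨fun hg => ⟨surjective hg.1, hg.2⟩, fun hg =>
            ⟨fun b => P.2.2 _ (hg.2 ▸ (Finpartition.mem_parts_ofFibers hg.1).2 ⟨b, rfl⟩), hg.2⟩⟩
    _ = Nat.card (β ≃ P.1.parts) := Nat.card_congr (Finpartition.labelingEquiv P.1)
    _ = (card β)! := by
        rw [Nat.card_eq_fintype_card,
          Fintype.card_equiv (Fintype.equivOfCardEq (by simp [P.2.1]))]

theorem card_fibers_ge_congr {α α' β β' : Type*} [Fintype α] [Fintype α'] [DecidableEq β]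
    [DecidableEq β'] (h : ℕ) (e₁ : α ≃ α') (e₂ : β ≃ β') :
    Nat.card {g : α → β // ∀ b, h ≤ #{a | g a = b}} =
      Nat.card {g : α' → β' // ∀ b, h ≤ #{a | g a = b}} := by
  refine Nat.card_congr (Equiv.subtypeEquiv (e₁.arrowCongr e₂) fun g => ?_)
  have card_fiber (b : β) : #{a | g a = b} = #{a' | e₁.arrowCongr e₂ g a' = e₂ b} :=
    card_equiv e₁ fun a => by simp
  simp only [card_fiber]
  exact e₂.forall_congr_right (q := fun b => h ≤ #{a | e₁.arrowCongr e₂ g a = b})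

theorem card_fibers_ge_eq_factorial_mul_Sge {α β : Type*} [Fintype α] [Fintype β]
    [DecidableEq β] {h : ℕ} (hh : 1 ≤ h) :
    Nat.card {g : α → β // ∀ b, h ≤ #{a | g a = b}} = (card β)! * Sge h (card α) (card β) := by
  rw [card_fibers_ge_congr h (equivFin α) (equivFin β),
    card_fibers_ge_eq_factorial_mul_card_partitions hh, Fintype.card_fin]
  rfl

section FixedFiber

variable {α β : Type*} [DecidableEq α] [DecidableEq β]

def fiberEqEquiv (S : Finset α) (b₀ : β) :
    {g : α → β // ∀ a, g a = b₀ ↔ a ∈ S} ≃ ({a // a ∉ S} → {b // b ≠ b₀}) where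
  toFun g a := ⟨g.1 a, fun h => a.2 ((g.2 a).1 h)⟩
  invFun g' := ⟨fun a => if ha : a ∈ S then b₀ else g' ⟨a, ha⟩, fun a => by
    by_cases ha : a ∈ S <;> simp [ha, (g' _).2]⟩
  left_inv g := by
    ext a
    by_cases ha : a ∈ S
    · simp [ha, (g.2 a).2 ha]
    · simp [ha]
  right_inv g' := by
    ext a
    simp [a.2]

theorem card_fiber_fiberEqEquiv [Fintype α] {S : Finset α} {b₀ : β}
    (g : {g : α → β // ∀ a, g a = b₀ ↔ a ∈ S}) (b : {b // b ≠ b₀}) :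
    #{a | fiberEqEquiv S b₀ g a = b} = #{a | g.1 a = b.1} := calc
  _ = card {a : {a // a ∉ S} // g.1 a.1 = b.1} := by
      rw [Fintype.card_subtype]
      simp [fiberEqEquiv, Subtype.ext_iff]
  _ = card {a // g.1 a = b.1} :=
      card_congr <| Equiv.subtypeSubtypeEquivSubtype (q := fun a => g.1 a = b.1)
        fun {a} ha hS => b.2 (ha ▸ (g.2 a).2 hS)
  _ = #{a | g.1 a = b.1} := Fintype.card_subtype _

theorem card_fibers_ge_of_fiber_eq [Fintype α] [Fintype β] {h : ℕ} (hh : 1 ≤ h) (b₀ : β)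
    {S : Finset α} (hS : h ≤ #S) :
    Nat.card {g : α → β // (∀ a, g a = b₀ ↔ a ∈ S) ∧ ∀ b, h ≤ #{a | g a = b}} =
      (card β - 1)! * Sge h (card α - #S) (card β - 1) := by
  have fibers_ge_iff (g : {g : α → β // ∀ a, g a = b₀ ↔ a ∈ S}) :
      (∀ b, h ≤ #{a | g.1 a = b}) ↔ ∀ b, h ≤ #{a | fiberEqEquiv S b₀ g a = b} := by
    have fiber_b₀ : ({a | g.1 a = b₀} : Finset α) = S := by
      ext a
      simp [g.2 a]
    simp only [card_fiber_fiberEqEquiv, Subtype.forall]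
    exact ⟨fun hg b _ => hg b,
      fun hg b => if hb : b = b₀ then by rw [hb, fiber_b₀]; exact hS else hg b hb⟩
  rw [← Nat.card_congr (Equiv.subtypeSubtypeEquivSubtypeInter _ _),
    Nat.card_congr (Equiv.subtypeEquiv (q := fun g => ∀ b, h ≤ #{a | g a = b})
      (fiberEqEquiv S b₀) fibers_ge_iff),
    card_fibers_ge_eq_factorial_mul_Sge hh, card_subtype_compl, card_subtype_compl, card_coe]
  simp

end FixedFiber

theorem card_finsets_containing {α : Type*} [Fintype α] [DecidableEq α] (a₀ : α) {k : ℕ}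
    (hk : 1 ≤ k) : Nat.card {S : Finset α // a₀ ∈ S ∧ #S = k} = (card α - 1).choose (k - 1) := by
  have : ({S | a₀ ∈ S ∧ #S = k} : Finset (Finset α)) =
      {S ∈ (univ : Finset α).powersetCard k | {a₀} ⊆ S} := by
    ext S
    simp [and_comm]
  rw [Nat.card_eq_fintype_card, Fintype.card_subtype, this,
    card_filter_powersetCard_subset _ _ _ (subset_univ _) (by simpa using hk), card_univ,
    card_singleton]

theorem card_fibers_ge_of_card_fiber_eq {α β : Type*} [Fintype α] [DecidableEq α] [Fintype β]
    [DecidableEq β] {h : ℕ} (hh : 1 ≤ h) (a₀ : α) :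
    Nat.card {g : α → β // (∀ b, h ≤ #{a | g a = b}) ∧ #{a | g a = g a₀} = h} =
      card β * (card α - 1).choose (h - 1) *
        ((card β - 1)! * Sge h (card α - h) (card β - 1)) := by
  rw [card_eq_card_mul_of_card_fiber_eq (Y := β × {S : Finset α // a₀ ∈ S ∧ #S = h})
    fun g => (g.1 a₀, ⟨({a | g.1 a = g.1 a₀} : Finset α), by simp, g.2.2⟩), Nat.card_prod,
    Nat.card_eq_fintype_card (α := β), card_finsets_containing a₀ hh]
  rintro ⟨c, S, ha₀S, rfl⟩
  rw [← card_fibers_ge_of_fiber_eq hh c le_rfl]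
  refine Nat.card_congr <| (Equiv.subtypeSubtypeEquivSubtypeExists _ _).trans <|
    Equiv.subtypeEquivRight fun g => ?_
  have fiber_eq_iff : (g a₀ = c ∧ ({a | g a = g a₀} : Finset α) = S) ↔
      ∀ a, g a = c ↔ a ∈ S := by
    constructor
    · rintro ⟨rfl, rfl⟩ a
      simp
    · intro hgS
      obtain rfl : g a₀ = c := (hgS a₀).2 ha₀S
      exact ⟨rfl, by ext a; simp [hgS]⟩
  simp only [Prod.mk.injEq, Subtype.mk.injEq, exists_prop, ← fiber_eq_iff]
  constructor
  · rintro ⟨⟨hg, -⟩, hS⟩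
    exact ⟨hS, hg⟩
  · rintro ⟨⟨hc, hS⟩, hg⟩
    exact ⟨⟨hg, congrArg card hS⟩, hc, hS⟩

theorem forall_le_card_erase_iff_lt {α β : Type*} [Fintype α] [DecidableEq α] [DecidableEq β]
    {g : α → β} {h : ℕ} (hg : ∀ b, h ≤ #{a | g a = b}) (a₀ : α) :
    (∀ b, h ≤ #(({a | g a = b} : Finset α).erase a₀)) ↔ h < #{a | g a = g a₀} := by
  have ha₀ : a₀ ∈ ({a | g a = g a₀} : Finset α) := by simp
  constructor
  · intro H
    have := H (g a₀)
    rw [card_erase_of_mem ha₀] at this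
    exact Nat.lt_of_le_sub_one (card_pos.2 ⟨a₀, ha₀⟩) this
  · intro hlt b
    by_cases hb : b = g a₀
    · rw [hb, card_erase_of_mem ha₀]
      exact Nat.le_sub_one_of_lt hlt
    · rw [erase_eq_of_notMem (by simp [Ne.symm hb])]
      exact hg b

/-- In the coupon collector problem with `d` kinds, where the collector stops upon having
at least `h` copies of every kind, the probability of stopping at exactly trial `n` is
`p_n = (d!/d^n) C(n-1,h-1) S_{≥h}(n-h, d-1)`. -/
theorem h_copies_stopping_probability (d h n : ℕ) (hd : 1 ≤ d) (hh : 1 ≤ h) (hn : 1 ≤ n) :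
    ((Nat.card {f : Fin n → Fin d //
        (∀ c : Fin d, h ≤ (Finset.univ.filter fun i : Fin n => f i = c).card) ∧
        ¬ (∀ c : Fin d,
            h ≤ (Finset.univ.filter fun i : Fin n => (i : ℕ) < n - 1 ∧ f i = c).card)} : ℕ) : ℝ)
        / (d : ℝ) ^ n
      = (Nat.factorial d : ℝ) / (d : ℝ) ^ n * (Nat.choose (n - 1) (h - 1) : ℝ) *
          (Sge h (n - h) (d - 1) : ℝ) := by
  obtain ⟨m, rfl⟩ : ∃ m, n = m + 1 := ⟨n - 1, by omega⟩
  have before_last (f : Fin (m + 1) → Fin d) (c : Fin d) :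
      ({i | (i : ℕ) < m + 1 - 1 ∧ f i = c} : Finset (Fin (m + 1))) =
        ({i | f i = c} : Finset _).erase (Fin.last m) := by
    ext i
    simp only [mem_filter, mem_univ, true_and, mem_erase, add_tsub_cancel_right, ne_eq,
      Fin.ext_iff, Fin.val_last]
    have := i.isLt
    constructor <;> omega
  rw [Nat.card_congr (Equiv.subtypeEquivRight fun f => and_congr_right fun hf => ?stops_iff),
    card_fibers_ge_of_card_fiber_eq hh (Fin.last m)]
  case stops_iff =>
    simp only [before_last, forall_le_card_erase_iff_lt hf]
    have := hf (f (Fin.last m))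
    omega
  simp only [Fintype.card_fin, add_tsub_cancel_right]
  rw [← Nat.mul_factorial_pred (by omega : d ≠ 0)]
  push_cast
  ring
end

section
/- For h = 1, the probability generating function of the coupon collection time satisfies P_1(x) = d ∫_0^∞ e^{-t d / x} (e^t - 1)^{d-1} dt = x d Σ_{j=0}^{d-1} C(d-1,j) (-1)^{d-1-j}/(d - j x), for 0 < x < 1. -/
open MeasureTheory

/-!
Expanding `k! S(m, k) = ∑ⱼ (-1)^(k-j) C(k,j) j^m` writes `p(n+1, d) x^(n+1)` as a finite
combination of the geometric sequences `(j x / d)^n`, `j < d`, which sum to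
`x d ∑ⱼ cⱼ / (d - j x)` with `cⱼ = C(d-1,j) (-1)^(d-1-j)`. Expanding `(eᵗ - 1)^(d-1)` binomially
writes the integrand as `∑ⱼ cⱼ e^(-(d/x - j) t)`, whose integral is the same sum.
-/

open Finset

theorem mul_choose_succ_add_succ_mul_choose (k j : ℕ) :
    j * (k + 1).choose j + (k + 1) * k.choose j = (k + 1) * (k + 1).choose j := by
  rcases le_or_gt j (k + 1) with hj | hj
  · rw [mul_comm (k + 1) (k.choose j), Nat.choose_mul_succ_eq, mul_comm _ (k + 1 - j),
      ← Nat.add_mul, Nat.add_sub_cancel' hj]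
  · simp [Nat.choose_eq_zero_of_lt hj, Nat.choose_eq_zero_of_lt (Nat.lt_of_succ_lt hj)]

theorem sum_range_succ_succ_neg_one_pow_mul_choose {R : Type*} [CommRing R] (k : ℕ) (f : ℕ → R) :
    ∑ j ∈ range (k + 2), (-1 : R) ^ (k + 1 - j) * k.choose j * f j =
      -∑ j ∈ range (k + 1), (-1 : R) ^ (k - j) * k.choose j * f j := by
  rw [sum_range_succ, Nat.choose_succ_self, Nat.cast_zero, mul_zero, zero_mul, add_zero,
    ← sum_neg_distrib]
  refine sum_congr rfl fun j hj => ?_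
  rw [Nat.sub_add_comm (mem_range_succ_iff.mp hj), pow_succ]
  ring

theorem factorial_mul_stirling_eq_sum {R : Type*} [CommRing R] (m k : ℕ) :
    (k.factorial : R) * stirling m k =
      ∑ j ∈ range (k + 1), (-1 : R) ^ (k - j) * k.choose j * (j : R) ^ m := by
  induction m generalizing k with
  | zero =>
    rcases k with _ | k
    · simp [stirling]
    · simpa [stirling, mul_comm, add_comm] using add_pow (1 : R) (-1) (k + 1)
  | succ m ih =>
    rcases k with _ | k
    · simp [stirling]
    have hterm : ∀ j ∈ range (k + 2),
        (-1 : R) ^ (k + 1 - j) * (k + 1).choose j * (j : R) ^ (m + 1) =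
          (k + 1) * ((-1 : R) ^ (k + 1 - j) * (k + 1).choose j * (j : R) ^ m) -
            (k + 1) * ((-1 : R) ^ (k + 1 - j) * k.choose j * (j : R) ^ m) := by
      intro j _
      have h := congrArg (Nat.cast (R := R)) (mul_choose_succ_add_succ_mul_choose k j)
      push_cast at h
      linear_combination (-1 : R) ^ (k + 1 - j) * (j : R) ^ m * h
    rw [sum_congr rfl hterm, sum_sub_distrib, ← mul_sum, ← mul_sum,
      sum_range_succ_succ_neg_one_pow_mul_choose, ← ih, ← ih, stirling, Nat.factorial_succ]
    push_cast
    ring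

theorem p_succ_mul_pow (n d : ℕ) (x : ℝ) :
    p (n + 1) d * x ^ (n + 1) =
      ∑ j ∈ range d, (d - 1).choose j * (-1 : ℝ) ^ (d - 1 - j) * x * (j * x / d) ^ n := by
  rcases d with _ | k
  · simp [p]
  have hk : ((k + 1 : ℕ) : ℝ) ≠ 0 := by positivity
  simp only [p, Nat.add_sub_cancel, Nat.factorial_succ, Nat.cast_mul, mul_assoc,
    factorial_mul_stirling_eq_sum, mul_sum, sum_div, sum_mul, div_pow]
  refine sum_congr rfl fun j _ => ?_
  field_simp
  ring

theorem hasSum_p_succ_mul_pow (d : ℕ) {x : ℝ} (hx : |x| < 1) :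
    HasSum (fun n => p (n + 1) d * x ^ (n + 1))
      (x * d * ∑ j ∈ range d, (d - 1).choose j * (-1 : ℝ) ^ (d - 1 - j) / (d - j * x)) := by
  simp_rw [p_succ_mul_pow, mul_sum]
  refine hasSum_sum fun j hj => ?_
  have hjd : (j : ℝ) < d := by exact_mod_cast mem_range.mp hj
  have hd : (0 : ℝ) < d := j.cast_nonneg.trans_lt hjd
  have hjx : |(j : ℝ) * x| < d := by
    rw [abs_mul, Nat.abs_cast]
    nlinarith [abs_nonneg x, j.cast_nonneg (α := ℝ)]
  have hratio : |j * x / d| < 1 := by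
    rwa [abs_div, Nat.abs_cast, div_lt_one hd]
  have hne : (d : ℝ) - j * x ≠ 0 := by linarith [(abs_lt.mp hjx).2]
  have hval : x * d * ((d - 1).choose j * (-1 : ℝ) ^ (d - 1 - j) / (d - j * x)) =
      (d - 1).choose j * (-1 : ℝ) ^ (d - 1 - j) * x * (1 - j * x / d)⁻¹ := by
    field_simp
  rw [hval]
  exact (hasSum_geometric_of_abs_lt_one hratio).mul_left _

theorem integral_exp_neg_mul_mul_exp_sub_one_pow {a : ℝ} {n : ℕ} (ha : n < a) :
    ∫ t in Set.Ioi (0 : ℝ), Real.exp (-(a * t)) * (Real.exp t - 1) ^ n =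
      ∑ j ∈ range (n + 1), n.choose j * (-1 : ℝ) ^ (n - j) / (a - j) := by
  have hlt : ∀ j ∈ range (n + 1), (j : ℝ) - a < 0 := fun j hj => by
    have : (j : ℝ) ≤ n := by exact_mod_cast mem_range_succ_iff.mp hj
    linarith
  have hexpand : ∀ t : ℝ, Real.exp (-(a * t)) * (Real.exp t - 1) ^ n =
      ∑ j ∈ range (n + 1), n.choose j * (-1 : ℝ) ^ (n - j) * Real.exp ((j - a) * t) := by
    intro t
    rw [sub_eq_add_neg, add_pow, mul_sum]
    refine sum_congr rfl fun j _ => ?_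
    rw [← Real.exp_nat_mul, sub_mul, sub_eq_add_neg, Real.exp_add]
    ring
  simp_rw [hexpand]
  rw [integral_finsetSum _ fun j hj => ((integrableOn_exp_mul_Ioi (hlt j hj) 0).const_mul _)]
  refine sum_congr rfl fun j hj => ?_
  rw [integral_const_mul, integral_exp_mul_Ioi (hlt j hj), mul_zero, Real.exp_zero,
    ← neg_sub a, neg_div_neg_eq]
  ring

/-- For `0 < x < 1`, the probability generating function `P_1(x) = Σ_n p(n,d) x^n`
satisfies `P_1(x) = d ∫_0^∞ e^{-td/x}(e^t - 1)^{d-1} dt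
                  = x d Σ_{j=0}^{d-1} C(d-1,j)(-1)^{d-1-j}/(d - jx)`. -/
theorem pgf_h_eq_one (d : ℕ) (hd : 1 ≤ d) (x : ℝ) (hx0 : 0 < x) (hx1 : x < 1) :
    (∑' n : ℕ, p (n + 1) d * x ^ (n + 1)
        = (d : ℝ) * ∫ t in Set.Ioi (0 : ℝ),
            Real.exp (-(t * d) / x) * (Real.exp t - 1) ^ (d - 1)) ∧
    (∑' n : ℕ, p (n + 1) d * x ^ (n + 1)
        = x * d * ∑ j ∈ Finset.range d,
            (Nat.choose (d - 1) j : ℝ) * (-1 : ℝ) ^ (d - 1 - j) / ((d : ℝ) - (j : ℝ) * x)) := by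
  have hpgf := (hasSum_p_succ_mul_pow d (abs_lt.2 ⟨by linarith, hx1⟩)).tsum_eq
  refine ⟨?_, hpgf⟩
  have hrate : ((d - 1 : ℕ) : ℝ) < d / x := by
    rw [lt_div_iff₀ hx0, Nat.cast_pred hd]
    nlinarith
  have hexp : ∀ t : ℝ, Real.exp (-(t * d) / x) = Real.exp (-(d / x * t)) := fun t => by
    ring_nf
  simp_rw [hexp, integral_exp_neg_mul_mul_exp_sub_one_pow hrate, Nat.sub_add_cancel hd, hpgf,
    mul_sum]
  refine sum_congr rfl fun j hj => ?_
  have hne : (d : ℝ) - j * x ≠ 0 := by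
    have : (j : ℝ) < d := by exact_mod_cast mem_range.mp hj
    nlinarith
  field_simp
end

section
/- In a coupon collector sequence over d kinds that terminates successfully at step n, the probability of terminating at step n with exactly j singletons (coupons drawn exactly once) is f(n,j) = (d!/d^n) · C(n-1, j-1) · S_{≥2}(n-j, d-j), where S_{≥2}(m,k) counts partitions of an m-set into k blocks each of size at least 2. -/
open Finset

theorem Finset.card_filter_mem_and_card_eq_succ {α : Type*} [DecidableEq α] [Fintype α] (a : α)
    (k : ℕ) :
    #{T : Finset α | a ∈ T ∧ #T = k + 1} = (Fintype.card α - 1).choose k := by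
  rw [← card_univ, ← card_erase_of_mem (mem_univ a), ← card_powersetCard]
  refine card_nbij' (·.erase a) (insert a) (fun T hT => ?_) (fun U hU => ?_) (fun T hT => ?_)
    fun U hU => ?_
  all_goals first
    | simp only [mem_coe, mem_filter, mem_univ, true_and] at hT
    | simp only [mem_coe, mem_powersetCard, subset_erase, subset_univ, true_and] at hU
  · simp [erase_subset_erase, card_erase_of_mem hT.1, hT.2]
  · simp [card_insert_of_notMem hU.1, hU.2]
  · exact insert_erase hT.1
  · exact erase_insert hU.1

theorem Function.Surjective.not_forall_exists_ne_iff {α β : Type*} {f : α → β}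
    (hf : Function.Surjective f) (a : α) :
    (¬ ∀ c, ∃ x, x ≠ a ∧ f x = c) ↔ ∀ x, f x = f a → x = a := by
  constructor
  · intro h x hx
    by_contra hxa
    obtain ⟨c, hc⟩ := not_forall.1 h
    obtain ⟨y, rfl⟩ := hf c
    by_cases hya : y = a
    · exact hc ⟨x, hxa, hya ▸ hx⟩
    · exact hc ⟨y, hya, rfl⟩
  · intro h hall
    obtain ⟨x, hxa, hx⟩ := hall (f a)
    exact hxa (h x hx)

namespace Finpartition

variable {α β : Type*} [DecidableEq α]

def singletons {s : Finset α} (P : Finpartition s) : Finset α := s.filter fun a => {a} ∈ P.parts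

lemma mem_singletons {s : Finset α} {P : Finpartition s} {a : α} :
    a ∈ P.singletons ↔ {a} ∈ P.parts := by
  simpa [singletons] using fun h => P.le h (mem_singleton_self a)

theorem ext_part {s : Finset α} {P Q : Finpartition s} (h : ∀ a ∈ s, P.part a = Q.part a) :
    P = Q := by
  ext p
  constructor <;> intro hp
  · obtain ⟨a, ha⟩ := P.nonempty_of_mem_parts hp
    rw [← P.part_eq_of_mem hp ha, h a (P.le hp ha)]
    exact Q.part_mem.2 (P.le hp ha)
  · obtain ⟨a, ha⟩ := Q.nonempty_of_mem_parts hp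
    rw [← Q.part_eq_of_mem hp ha, ← h a (Q.le hp ha)]
    exact P.part_mem.2 (Q.le hp ha)

lemma singleton_mem_parts_iff {s : Finset α} {P : Finpartition s} {a : α} (ha : a ∈ s) :
    {a} ∈ P.parts ↔ P.part a = {a} :=
  ⟨fun h => P.part_eq_of_mem h (mem_singleton_self a), fun h => h ▸ P.part_mem.2 ha⟩

lemma parts_eq_image_part {s : Finset α} (P : Finpartition s) : P.parts = s.image P.part := by
  ext p
  simp only [mem_image]
  refine ⟨fun hp => ?_, fun ⟨a, ha, hp⟩ => hp ▸ P.part_mem.2 ha⟩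
  obtain ⟨a, ha⟩ := P.nonempty_of_mem_parts hp
  exact ⟨a, P.le hp ha, P.part_eq_of_mem hp ha⟩

section Embedding

variable (e : β ↪ α) {u : Finset β}

lemma map_preimage_of_mem_parts (Q : Finpartition (u.map e)) {q : Finset α} (hq : q ∈ Q.parts) :
    (q.preimage e e.injective.injOn).map e = q := by
  obtain ⟨r, -, rfl⟩ := subset_map_iff.1 (Q.le hq)
  rw [preimage_map]

variable [DecidableEq β]

def mapEmb (P : Finpartition u) : Finpartition (u.map e) :=
  ofExistsUnique (P.parts.map (Finset.mapEmbedding e).toEmbedding)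
    (by simpa using fun p hp => P.le hp)
    (by
      simp only [mem_map, forall_exists_index, and_imp, forall_apply_eq_imp_iff₂]
      intro b hb
      obtain ⟨t, ⟨ht, hbt⟩, huniq⟩ := P.existsUnique_mem hb
      refine ⟨t.map e, ⟨⟨t, ht, rfl⟩, by simpa using hbt⟩, ?_⟩
      rintro _ ⟨⟨p, hp, rfl⟩, hbp⟩
      simp only [RelEmbedding.coe_toEmbedding, mapEmbedding_apply, mem_map'] at hbp ⊢
      rw [huniq p ⟨hp, hbp⟩])
    (by simp [P.empty_notMem_parts])

noncomputable def comapEmb (Q : Finpartition (u.map e)) : Finpartition u :=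
  ofExistsUnique (Q.parts.image fun q => q.preimage e e.injective.injOn)
    (by simpa using fun q hq => preimage_subset (Q.le hq))
    (by
      intro b hb
      obtain ⟨q, ⟨hq, hbq⟩, huniq⟩ := Q.existsUnique_mem (mem_map_of_mem e hb)
      refine ⟨q.preimage e e.injective.injOn, ⟨mem_image_of_mem _ hq, by simpa using hbq⟩, ?_⟩
      rintro _ ⟨ht, hbt⟩
      obtain ⟨r, hr, rfl⟩ := mem_image.1 ht
      rw [huniq r ⟨hr, by simpa using hbt⟩])
    (by
      simp only [mem_image, not_exists, not_and]
      intro q hq h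
      exact Q.ne_empty hq (by rw [← map_preimage_of_mem_parts e Q hq, h, map_empty]))

noncomputable def mapEmbEquiv : Finpartition u ≃ Finpartition (u.map e) where
  toFun := mapEmb e
  invFun := comapEmb e
  left_inv P := by
    ext p
    simp [mapEmb, comapEmb]
  right_inv Q := by
    ext q
    simp only [mapEmb, comapEmb, ofExistsUnique_parts, mem_map, mem_image,
      RelEmbedding.coe_toEmbedding, mapEmbedding_apply]
    constructor
    · rintro ⟨_, ⟨r, hr, rfl⟩, rfl⟩
      rwa [map_preimage_of_mem_parts e Q hr]
    · exact fun hq => ⟨_, ⟨q, hq, rfl⟩, map_preimage_of_mem_parts e Q hq⟩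

end Embedding

theorem card_finpartition_map_eq_Sge {m : ℕ} (e : Fin m ↪ α) (h k : ℕ) :
    Nat.card {P : Finpartition (univ.map e) // P.parts.card = k ∧ ∀ p ∈ P.parts, h ≤ p.card} =
      Sge h m k :=
  (Nat.card_congr ((mapEmbEquiv e).subtypeEquiv fun P => by
    simp [mapEmbEquiv, mapEmb])).symm

theorem card_finpartition_eq_Sge (t : Finset α) (h k : ℕ) :
    Nat.card {P : Finpartition t // P.parts.card = k ∧ ∀ p ∈ P.parts, h ≤ p.card} =
      Sge h t.card k := by
  obtain ⟨e, he⟩ : ∃ e : Fin t.card ↪ α, univ.map e = t := by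
    refine ⟨t.equivFin.symm.toEmbedding.trans (Function.Embedding.subtype _), ?_⟩
    ext a
    simpa using
      ⟨fun ⟨x, hx⟩ => hx ▸ (t.equivFin.symm x).2, fun ha => ⟨t.equivFin ⟨a, ha⟩, by simp⟩⟩
  rw [← card_finpartition_map_eq_Sge e h k, he]

section Singletons

variable {s T : Finset α}

lemma two_le_card_part {P : Finpartition s} {a : α} (ha : a ∈ s) (has : a ∉ P.singletons) :
    2 ≤ (P.part a).card := by
  by_contra! hlt
  have : P.part a = {a} :=
    eq_singleton_iff_unique_mem.2
      ⟨P.mem_part ha, fun b hb => card_le_one.1 (by omega) b hb a (P.mem_part ha)⟩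
  exact has (mem_singletons.2 (this ▸ P.part_mem.2 ha))

def removeSingletons (P : Finpartition s) : Finpartition (s \ P.singletons) :=
  P.ofSubset (filter_subset (fun p => 2 ≤ p.card) P.parts) (by
    ext a
    simp only [mem_sup, mem_filter, id, mem_sdiff]
    constructor
    · rintro ⟨p, ⟨hp, hcard⟩, hap⟩
      refine ⟨P.le hp hap, fun ha => ?_⟩
      rw [P.eq_of_mem_parts hp (mem_singletons.1 ha) hap (mem_singleton_self a),
        card_singleton] at hcard
      omega
    · rintro ⟨has, ha⟩
      exact ⟨P.part a, ⟨P.part_mem.2 has, two_le_card_part has ha⟩, P.mem_part has⟩)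

def addSingletons (Q : Finpartition (s \ T)) (hT : T ⊆ s) : Finpartition s :=
  ofExistsUnique (Q.parts ∪ T.image singleton)
    (by
      simp only [mem_union, mem_image]
      rintro p (hp | ⟨a, ha, rfl⟩)
      · exact (Q.le hp).trans sdiff_subset
      · exact singleton_subset_iff.2 (hT ha))
    (by
      intro a has
      by_cases haT : a ∈ T
      · refine ⟨{a}, ⟨mem_union_right _ (mem_image_of_mem _ haT), mem_singleton_self a⟩, ?_⟩
        simp only [mem_union, mem_image, and_imp]
        rintro p (hp | ⟨b, -, rfl⟩) hap
        · exact absurd haT (mem_sdiff.1 (Q.le hp hap)).2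
        · rw [mem_singleton.1 hap]
      · obtain ⟨p, ⟨hp, hap⟩, huniq⟩ := Q.existsUnique_mem (mem_sdiff.2 ⟨has, haT⟩)
        refine ⟨p, ⟨mem_union_left _ hp, hap⟩, ?_⟩
        simp only [mem_union, mem_image, and_imp]
        rintro q (hq | ⟨b, hb, rfl⟩) haq
        · exact huniq q ⟨hq, haq⟩
        · exact absurd (mem_singleton.1 haq ▸ hb) haT)
    (by simp [Q.empty_notMem_parts])

lemma addSingletons_removeSingletons (P : Finpartition s) :
    addSingletons P.removeSingletons (filter_subset _ _) = P := by
  ext p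
  simp only [addSingletons, removeSingletons, ofExistsUnique_parts, ofSubset_parts, mem_union,
    mem_filter, mem_image, mem_singletons]
  constructor
  · rintro (⟨hp, -⟩ | ⟨a, ha, rfl⟩) <;> assumption
  · intro hp
    by_cases hcard : 2 ≤ p.card
    · exact Or.inl ⟨hp, hcard⟩
    · have hone : p.card = 1 := by
        have := card_pos.2 (P.nonempty_of_mem_parts hp)
        omega
      obtain ⟨a, rfl⟩ := card_eq_one.1 hone
      exact Or.inr ⟨a, hp, rfl⟩

lemma singletons_addSingletons (hT : T ⊆ s) {Q : Finpartition (s \ T)}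
    (hQ : ∀ q ∈ Q.parts, 2 ≤ q.card) : (addSingletons Q hT).singletons = T := by
  ext a
  simp only [mem_singletons, addSingletons, ofExistsUnique_parts, mem_union, mem_image,
    singleton_inj, exists_eq_right, or_iff_right_iff_imp]
  intro ha
  simpa using hQ _ ha

lemma card_parts_addSingletons (hT : T ⊆ s) {Q : Finpartition (s \ T)}
    (hQ : ∀ q ∈ Q.parts, 2 ≤ q.card) :
    (addSingletons Q hT).parts.card = T.card + Q.parts.card := by
  rw [addSingletons, ofExistsUnique_parts, card_union_of_disjoint, add_comm,
    card_image_of_injective _ singleton_injective]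
  simp only [disjoint_left, mem_image]
  rintro q hq ⟨a, -, rfl⟩
  simpa using hQ _ hq

lemma parts_removeSingletons_addSingletons (hT : T ⊆ s) {Q : Finpartition (s \ T)}
    (hQ : ∀ q ∈ Q.parts, 2 ≤ q.card) : (addSingletons Q hT).removeSingletons.parts = Q.parts := by
  ext q
  simp only [removeSingletons, addSingletons, ofSubset_parts, ofExistsUnique_parts, mem_filter,
    mem_union, mem_image]
  constructor
  · rintro ⟨hq | ⟨a, -, rfl⟩, hcard⟩
    · exact hq
    · simp at hcard
  · exact fun hq => ⟨Or.inl hq, hQ q hq⟩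

def singletonsEquiv (hT : T ⊆ s) :
    {P : Finpartition s // P.singletons = T} ≃
      {Q : Finpartition (s \ T) // ∀ q ∈ Q.parts, 2 ≤ q.card} where
  toFun P := ⟨P.1.removeSingletons.copy (by rw [P.2]), by simp [removeSingletons]⟩
  invFun Q := ⟨addSingletons Q.1 hT, singletons_addSingletons hT Q.2⟩
  left_inv := by
    rintro ⟨P, rfl⟩
    exact Subtype.ext (addSingletons_removeSingletons P)
  right_inv := by
    rintro ⟨Q, hQ⟩
    exact Subtype.ext (Finpartition.ext (parts_removeSingletons_addSingletons hT hQ))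

theorem card_with_singletons (hT : T ⊆ s) (k : ℕ) :
    Nat.card {P : Finpartition s // P.singletons = T ∧ P.parts.card = T.card + k} =
      Nat.card {Q : Finpartition (s \ T) // Q.parts.card = k ∧ ∀ q ∈ Q.parts, 2 ≤ q.card} := by
  calc _ = Nat.card {P : {P : Finpartition s // P.singletons = T} //
          P.1.parts.card = T.card + k} :=
        Nat.card_congr (Equiv.subtypeSubtypeEquivSubtypeInter _ _).symm
    _ = Nat.card {Q : {Q : Finpartition (s \ T) // ∀ q ∈ Q.parts, 2 ≤ q.card} //
          Q.1.parts.card = k} :=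
        (Nat.card_congr ((singletonsEquiv hT).symm.subtypeEquiv fun Q =>
          show _ ↔ (addSingletons Q.1 hT).parts.card = T.card + k by
            rw [card_parts_addSingletons hT Q.2, Nat.add_left_cancel_iff])).symm
    _ = _ := Nat.card_congr <| (Equiv.subtypeSubtypeEquivSubtypeInter
        (fun Q : Finpartition (s \ T) => ∀ q ∈ Q.parts, 2 ≤ q.card) (·.parts.card = k)).trans <|
        Equiv.subtypeEquivRight fun _ => and_comm

end Singletons

section Ker

variable [Fintype α] [DecidableEq β]

def ker (f : α → β) : Finpartition (univ : Finset α) := ofSetoid (Setoid.ker f)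

lemma mem_part_ker {f : α → β} {a b : α} : b ∈ (ker f).part a ↔ f a = f b :=
  mem_part_ofSetoid_iff_rel

lemma part_ker (f : α → β) (a : α) : (ker f).part a = univ.filter fun b => f b = f a := by
  ext b
  simp [mem_part_ker, eq_comm]

lemma ker_eq_iff {f : α → β} {P : Finpartition (univ : Finset α)} :
    ker f = P ↔ ∀ a b, f a = f b ↔ b ∈ P.part a := by
  refine ⟨fun h a b => h ▸ mem_part_ker.symm, fun h => ext_part fun a _ => ?_⟩
  ext b
  rw [mem_part_ker, h]

lemma mem_singletons_ker {f : α → β} {a : α} :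
    a ∈ (ker f).singletons ↔ ∀ b, f b = f a → b = a := by
  rw [mem_singletons, singleton_mem_parts_iff (mem_univ a), part_ker,
    eq_singleton_iff_unique_mem]
  simp

lemma card_singletons_ker [Fintype β] (f : α → β) :
    (ker f).singletons.card = #{c | #{a | f a = c} = 1} := by
  refine card_bij (fun a _ => f a) (fun a ha => ?_) (fun a ha a' ha' h => ?_) fun c hc => ?_
  · simp only [mem_filter, mem_univ, true_and, card_eq_one]
    exact ⟨a, eq_singleton_iff_unique_mem.2 ⟨by simp, by simpa using mem_singletons_ker.1 ha⟩⟩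
  · exact (mem_singletons_ker.1 ha a' h.symm).symm
  · obtain ⟨a, ha⟩ := card_eq_one.1 (mem_filter.1 hc).2
    have hfa : f a = c := by simpa using ha.symm.subset (mem_singleton_self a)
    refine ⟨a, mem_singletons_ker.2 fun b hb => ?_, hfa⟩
    have hb' : b ∈ ({x | f x = c} : Finset α) := by simp [hb, hfa]
    simpa [ha] using hb'

lemma card_parts_ker (f : α → β) : (ker f).parts.card = (univ.image f).card := by
  have : (ker f).parts = (univ.image f).image fun c => ({b | f b = c} : Finset α) := by
    rw [parts_eq_image_part, image_image]
    exact image_congr fun a _ => part_ker f a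
  rw [this, card_image_of_injOn]
  rintro _ ha c - h
  obtain ⟨a, -, rfl⟩ := mem_image.1 ha
  simpa using (Finset.ext_iff.1 h a).1 (by simp)

theorem card_parts_ker_eq_card_iff [Fintype β] {f : α → β} :
    (ker f).parts.card = Fintype.card β ↔ Function.Surjective f := by
  rw [card_parts_ker, card_eq_iff_eq_univ, eq_univ_iff_forall]
  simp [Function.Surjective]

theorem card_ker_eq (P : Finpartition (univ : Finset α)) [Fintype β] :
    Nat.card {f : α → β // ker f = P} = (Fintype.card β).descFactorial P.parts.card := by
  have hpart : ∀ a, P.part a ∈ P.parts := fun a => P.part_mem.2 (mem_univ a)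
  let lift (g : P.parts ↪ β) : {f : α → β // ker f = P} :=
    ⟨fun a => g ⟨P.part a, hpart a⟩, ker_eq_iff.2 fun a b => by
      rw [g.injective.eq_iff, Subtype.mk.injEq,
        P.mem_part_iff_part_eq_part (mem_univ b) (mem_univ a), eq_comm]⟩
  have hbij : Function.Bijective lift := by
    constructor
    · intro g g' h
      ext ⟨p, hp⟩
      obtain ⟨a, ha⟩ := P.nonempty_of_mem_parts hp
      have := congrFun (congrArg Subtype.val h) a
      simp only [lift, P.part_eq_of_mem hp ha] at this
      exact this
    · rintro ⟨f, hf⟩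
      rw [ker_eq_iff] at hf
      have hrep (p : P.parts) : ∃ a, P.part a = p.1 := by
        obtain ⟨a, ha⟩ := P.nonempty_of_mem_parts p.2
        exact ⟨a, P.part_eq_of_mem p.2 ha⟩
      choose r hr using hrep
      refine ⟨⟨fun p => f (r p), fun p q (h : f (r p) = f (r q)) => Subtype.ext ?_⟩,
        Subtype.ext (funext fun a => ?_)⟩
      · rw [← hr p, ← hr q, ← P.mem_part_iff_part_eq_part (mem_univ _) (mem_univ _), ← hf]
        exact h.symm
      · show f (r _) = f a
        rw [hf, P.mem_part_iff_part_eq_part (mem_univ _) (mem_univ _), hr]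
  rw [← Nat.card_congr (Equiv.ofBijective lift hbij), Nat.card_eq_fintype_card,
    Fintype.card_embedding_eq, Fintype.card_coe]

theorem card_fun_ker [Fintype β] (p : Finpartition (univ : Finset α) → Prop)
    (hp : ∀ P, p P → P.parts.card = Fintype.card β) :
    Nat.card {f : α → β // p (ker f)} = (Fintype.card β).factorial * Nat.card {P // p P} := by
  classical
  calc _ = ∑ P : Subtype p, Nat.card {f : α → β // ker f = P} := by
        rw [← Nat.card_congr (Equiv.sigmaSubtypeFiberEquivSubtype ker fun _ => Iff.rfl),
          Nat.card_sigma]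
    _ = ∑ _ : Subtype p, (Fintype.card β).factorial :=
        sum_congr rfl fun P _ => by rw [card_ker_eq, hp P P.2, Nat.descFactorial_self]
    _ = _ := by simp [Nat.card_eq_fintype_card, mul_comm]

end Ker

section Count

variable [Fintype α]

theorem card_eq_choose_mul_Sge (a : α) (j k : ℕ) :
    Nat.card {P : Finpartition (univ : Finset α) //
        P.parts.card = j + 1 + k ∧ a ∈ P.singletons ∧ P.singletons.card = j + 1} =
      (Fintype.card α - 1).choose j * Sge 2 (Fintype.card α - (j + 1)) k := by
  rw [Nat.card_eq_fintype_card, Fintype.card_subtype,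
    card_eq_sum_card_fiberwise (f := singletons) (t := {T | a ∈ T ∧ #T = j + 1})
      (fun P hP => by simp_all), ← card_filter_mem_and_card_eq_succ a j, ← smul_eq_mul,
    ← sum_const]
  refine sum_congr rfl fun T hT => ?_
  rw [mem_filter] at hT
  calc _ = Nat.card {P : Finpartition univ // P.singletons = T ∧ P.parts.card = T.card + k} := by
        rw [Nat.card_eq_fintype_card, Fintype.card_subtype, filter_filter]
        congr 1
        ext P
        simp only [mem_filter, mem_univ, true_and, hT.2.2]
        constructor
        · rintro ⟨⟨hcard, -, -⟩, rfl⟩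
          exact ⟨rfl, hT.2.2 ▸ hcard⟩
        · rintro ⟨rfl, hcard⟩
          exact ⟨⟨hT.2.2 ▸ hcard, hT.2.1, hT.2.2⟩, rfl⟩
    _ = _ := by
        rw [card_with_singletons (subset_univ T), card_finpartition_eq_Sge, card_univ_sdiff,
          hT.2.2]

end Count

end Finpartition

open Finpartition

theorem singletons_joint_distribution_general (d n j : ℕ) (hn : 1 ≤ n) (hj : 1 ≤ j)
    (hjd : j ≤ d) :
    ((Nat.card {f : Fin n → Fin d //
        (∀ c : Fin d, ∃ i : Fin n, f i = c) ∧
        ¬ (∀ c : Fin d, ∃ i : Fin n, (i : ℕ) < n - 1 ∧ f i = c) ∧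
        (Finset.univ.filter fun c : Fin d =>
          (Finset.univ.filter fun i : Fin n => f i = c).card = 1).card = j} : ℕ) : ℝ)
        / (d : ℝ) ^ n
      = (Nat.factorial d : ℝ) / (d : ℝ) ^ n * (Nat.choose (n - 1) (j - 1) : ℝ) *
          (Sge 2 (n - j) (d - j) : ℝ) := by
  obtain ⟨m, rfl⟩ := Nat.exists_eq_add_of_le' hn
  obtain ⟨i, rfl⟩ := Nat.exists_eq_add_of_le' hj
  obtain ⟨k, rfl⟩ := Nat.exists_eq_add_of_le hjd
  have hlast (x : Fin (m + 1)) : (x : ℕ) < m + 1 - 1 ↔ x ≠ Fin.last m := by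
    rw [Nat.add_sub_cancel, ← Fin.lt_last_iff_ne_last, Fin.lt_def, Fin.val_last]
  have hcount := card_fun_ker (β := Fin (i + 1 + k)) (fun P => P.parts.card = i + 1 + k ∧
      Fin.last m ∈ P.singletons ∧ P.singletons.card = i + 1) fun P hP => by simp [hP.1]
  rw [card_eq_choose_mul_Sge] at hcount
  rw [Nat.card_congr (Equiv.subtypeEquivRight fun f => ?_), hcount]
  · simp only [Fintype.card_fin, Nat.add_sub_cancel, Nat.add_sub_cancel_left,
      Nat.add_sub_add_right]
    push_cast
    ring
  have hsurj : (ker f).parts.card = i + 1 + k ↔ Function.Surjective f := by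
    rw [← card_parts_ker_eq_card_iff, Fintype.card_fin]
  rw [hsurj, card_singletons_ker, mem_singletons_ker]
  simp only [hlast]
  exact and_congr_right fun hf =>
    and_congr_left' (Function.Surjective.not_forall_exists_ne_iff hf _)

/-- The probability that a coupon collector sequence over `d` kinds first becomes complete
at step `n` with exactly `j` singletons (kinds drawn exactly once) is
`f(n,j) = (d!/d^n) C(n-1, j-1) S_{≥2}(n-j, d-j)`. -/
theorem singletons_joint_distribution (d n j : ℕ) (hd : 1 ≤ d) (hn : 1 ≤ n) (hj : 1 ≤ j)
    (hjd : j ≤ d) :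
    ((Nat.card {f : Fin n → Fin d //
        (∀ c : Fin d, ∃ i : Fin n, f i = c) ∧
        ¬ (∀ c : Fin d, ∃ i : Fin n, (i : ℕ) < n - 1 ∧ f i = c) ∧
        (Finset.univ.filter fun c : Fin d =>
          (Finset.univ.filter fun i : Fin n => f i = c).card = 1).card = j} : ℕ) : ℝ)
        / (d : ℝ) ^ n
      = (Nat.factorial d : ℝ) / (d : ℝ) ^ n * (Nat.choose (n - 1) (j - 1) : ℝ) *
          (Sge 2 (n - j) (d - j) : ℝ) :=
  singletons_joint_distribution_general d n j hn hj hjd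
end
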